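/- arXiv:2212.12299 — 15 statements merged into one kernel-verified Lean document; each statement's English description precedes it below -/
import Mathlib

section
/- Fix a continuous function A : ℝ → ℝ. For each α ∈ ℝ define an operator P_α on continuous functions f : ℝ → ℝ by P_α(f)(x) = exp(−α·A(x)) · ∫₀ˣ exp(α·A(t))·f(t) dt. Then for all continuous f, g : ℝ → ℝ and all α, β ∈ ℝ one has P_α(f)·P_β(g) = P_{α+β}( P_α(f)·g + f·P_β(g) ), where · denotes the pointwise product of functions; that is, (P_α)_{α∈ℝ} is a Rota-Baxter family of weight 0 on the algebra of continuous real-valued functions on ℝ, indexed by the additive semigroup (ℝ, +). -/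
/-- The Rota-Baxter family operator `P_α` on continuous functions:
`P_α(f)(x) = exp(-α·A(x)) · ∫₀ˣ exp(α·A(t))·f(t) dt`. -/
noncomputable def RBop (A : ℝ → ℝ) (α : ℝ) (f : ℝ → ℝ) : ℝ → ℝ :=
  fun x => Real.exp (-α * A x) * ∫ t in (0 : ℝ)..x, Real.exp (α * A t) * f t

/-- `(P_α)_{α ∈ ℝ}` is a Rota-Baxter family of weight `0` on the algebra of continuous
real-valued functions on `ℝ`, indexed by the additive semigroup `(ℝ, +)`:
`P_α(f)·P_β(g) = P_{α+β}( P_α(f)·g + f·P_β(g) )` for all continuous `f, g`. -/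
theorem stmt_0 (A : ℝ → ℝ) (hA : Continuous A)
    (f g : ℝ → ℝ) (hf : Continuous f) (hg : Continuous g) (α β : ℝ) :
    (fun x => RBop A α f x * RBop A β g x) =
      RBop A (α + β) (fun x => RBop A α f x * g x + f x * RBop A β g x) := by
  set φ : ℝ → ℝ := fun t => Real.exp (α * A t) * f t with hφ
  set ψ : ℝ → ℝ := fun t => Real.exp (β * A t) * g t with hψ
  have hφc : Continuous φ := ((hA.const_smul α).rexp.mul hf)
  have hψc : Continuous ψ := ((hA.const_smul β).rexp.mul hg)
  set F : ℝ → ℝ := fun x => ∫ t in (0:ℝ)..x, φ t with hF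
  set G : ℝ → ℝ := fun x => ∫ t in (0:ℝ)..x, ψ t with hG
  funext x
  have key : (∫ t in (0:ℝ)..x, ψ t * F t + φ t * G t) = F x * G x := by
    have h : ∀ t ∈ Set.uIcc (0:ℝ) x, HasDerivAt (fun u => F u * G u)
        (ψ t * F t + φ t * G t) t := by
      intro t _
      have hFt : HasDerivAt F (φ t) t := (hφc.integral_hasStrictDerivAt 0 t).hasDerivAt
      have hGt : HasDerivAt G (ψ t) t := (hψc.integral_hasStrictDerivAt 0 t).hasDerivAt
      have : HasDerivAt (fun u => F u * G u) (φ t * G t + F t * ψ t) t := hFt.mul hGt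
      convert this using 1; ring
    have hint : IntervalIntegrable (fun t => ψ t * F t + φ t * G t) MeasureTheory.volume 0 x := by
      apply Continuous.intervalIntegrable
      have hFc : Continuous F := continuous_iff_continuousAt.2 fun t =>
        ((hφc.integral_hasStrictDerivAt 0 t).hasDerivAt).continuousAt
      have hGc : Continuous G := continuous_iff_continuousAt.2 fun t =>
        ((hψc.integral_hasStrictDerivAt 0 t).hasDerivAt).continuousAt
      exact (hψc.mul hFc).add (hφc.mul hGc)
    have := intervalIntegral.integral_eq_sub_of_hasDerivAt h hint
    simp [hF, hG] at this ⊢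
    linarith [this]
  show Real.exp (-α * A x) * F x * (Real.exp (-β * A x) * G x) = _
  have hsimp : (fun t => Real.exp ((α + β) * A t) *
      (Real.exp (-α * A t) * F t * g t + f t * (Real.exp (-β * A t) * G t)))
      = fun t => ψ t * F t + φ t * G t := by
    funext t
    simp only [φ, ψ, hφ, hψ]
    simp only [neg_mul, Real.exp_neg, add_mul, Real.exp_add]
    field_simp
  show _ = Real.exp (-(α + β) * A x) * ∫ t in (0:ℝ)..x,
      Real.exp ((α + β) * A t) * (Real.exp (-α * A t) * F t * g t + f t * (Real.exp (-β * A t) * G t))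
  rw [hsimp, key]
  simp only [neg_mul, Real.exp_neg, add_mul, Real.exp_add]
  field_simp
end

section
/- Let A be an associative conformal algebra over 𝔽, Ω a semigroup, and (P_ω)_{ω∈Ω} a family of linear maps P_ω : A → A with P_ω ∘ ∂ = ∂ ∘ P_ω. Let V = A ⊗_𝔽 𝔽Ω, equipped for each λ ∈ 𝔽 with the bilinear product determined by (x ⊗ α) ·_λ (y ⊗ β) = (x ·_λ y) ⊗ (αβ), and let P : V → V be the linear map determined by P(x ⊗ ω) = P_ω(x) ⊗ ω. Then (P_ω)_{ω∈Ω} is a Rota-Baxter family operator of weight q on A if and only if P(u) ·_λ P(v) = P( P(u) ·_λ v + u ·_λ P(v) + q (u ·_λ v) ) for all u, v ∈ V and λ ∈ 𝔽. -/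
/-- The `λ`-product on `V = A ⊗ 𝔽Ω`, realized as the free module `Ω →₀ A`,
determined by `(x ⊗ α) ·_λ (y ⊗ β) = (x ·_λ y) ⊗ (αβ)`. -/
noncomputable def mulV {F : Type*} [Field F] {Ω : Type*} [Semigroup Ω]
    {A : Type*} [AddCommGroup A] [Module F A]
    (mul : F → A → A → A) (lam : F) (u v : Ω →₀ A) : Ω →₀ A :=
  u.sum fun α x => v.sum fun β y => Finsupp.single (α * β) (mul lam x y)

/-- The linear operator `P` on `V = A ⊗ 𝔽Ω` determined by `P(x ⊗ ω) = P_ω(x) ⊗ ω`. -/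
noncomputable def PV {F : Type*} [Field F] {Ω : Type*}
    {A : Type*} [AddCommGroup A] [Module F A]
    (P : Ω → A →ₗ[F] A) (u : Ω →₀ A) : Ω →₀ A :=
  u.sum fun ω x => Finsupp.single ω (P ω x)

section AuxRB
set_option linter.unusedSectionVars false
variable {F : Type*} [Field F] {Ω : Type*} [Semigroup Ω]
    {A : Type*} [AddCommGroup A] [Module F A]

variable (mul : F → A → A → A)

lemma mul_zl (hadd1 : ∀ (l : F) (a a' b : A), mul l (a + a') b = mul l a b + mul l a' b)
    (l : F) (b : A) : mul l 0 b = 0 := by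
  have h : mul l 0 b + 0 = mul l 0 b + mul l 0 b := by
    rw [add_zero]; simpa using hadd1 l 0 0 b
  exact (add_left_cancel h).symm

lemma mul_zr (hadd2 : ∀ (l : F) (a b b' : A), mul l a (b + b') = mul l a b + mul l a b')
    (l : F) (a : A) : mul l a 0 = 0 := by
  have h : mul l a 0 + 0 = mul l a 0 + mul l a 0 := by
    rw [add_zero]; simpa using hadd2 l a 0 0
  exact (add_left_cancel h).symm

lemma mulV_single_single
    (hadd1 : ∀ (l : F) (a a' b : A), mul l (a + a') b = mul l a b + mul l a' b)
    (hadd2 : ∀ (l : F) (a b b' : A), mul l a (b + b') = mul l a b + mul l a b')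
    (l : F) (α β : Ω) (a b : A) :
    mulV mul l (Finsupp.single α a) (Finsupp.single β b)
      = Finsupp.single (α * β) (mul l a b) := by
  unfold mulV
  rw [Finsupp.sum_single_index, Finsupp.sum_single_index]
  · rw [mul_zr mul hadd2, Finsupp.single_zero]
  · rw [Finsupp.sum_single_index]
    · rw [mul_zl mul hadd1, Finsupp.single_zero]
    · rw [mul_zr mul hadd2, Finsupp.single_zero]

lemma mulV_zero_left (l : F) (v : Ω →₀ A) : mulV mul l 0 v = 0 := by
  simp [mulV]

lemma mulV_zero_right (l : F) (u : Ω →₀ A) : mulV mul l u 0 = 0 := by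
  simp [mulV]

lemma mulV_add_left
    (hadd1 : ∀ (l : F) (a a' b : A), mul l (a + a') b = mul l a b + mul l a' b)
    (l : F) (u u' v : Ω →₀ A) :
    mulV mul l (u + u') v = mulV mul l u v + mulV mul l u' v := by
  unfold mulV
  apply Finsupp.sum_add_index'
  · intro α
    apply Finset.sum_eq_zero
    intro β _
    simp [mul_zl mul hadd1]
  · intro α x x'
    rw [← Finsupp.sum_add]
    apply Finsupp.sum_congr
    intro β _
    rw [hadd1 l x x' (v β), Finsupp.single_add]

lemma mulV_add_right
    (hadd2 : ∀ (l : F) (a b b' : A), mul l a (b + b') = mul l a b + mul l a b')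
    (l : F) (u v v' : Ω →₀ A) :
    mulV mul l u (v + v') = mulV mul l u v + mulV mul l u v' := by
  unfold mulV
  rw [← Finsupp.sum_add]
  apply Finsupp.sum_congr
  intro α _
  apply Finsupp.sum_add_index'
  · intro β
    rw [mul_zr mul hadd2, Finsupp.single_zero]
  · intro β y y'
    rw [hadd2 l (u α) y y', Finsupp.single_add]


lemma PV_zero (P : Ω → A →ₗ[F] A) : PV P (0 : Ω →₀ A) = 0 := by simp [PV]

lemma PV_single (P : Ω → A →ₗ[F] A) (ω : Ω) (x : A) :
    PV P (Finsupp.single ω x) = Finsupp.single ω (P ω x) := by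
  unfold PV
  rw [Finsupp.sum_single_index]
  simp

lemma PV_add (P : Ω → A →ₗ[F] A) (u v : Ω →₀ A) :
    PV P (u + v) = PV P u + PV P v := by
  unfold PV
  apply Finsupp.sum_add_index'
  · intro ω; simp
  · intro ω x y; rw [map_add, Finsupp.single_add]


end AuxRB

/-- `(P_ω)_{ω∈Ω}` is a Rota-Baxter family operator of weight `q` on the associative
conformal algebra `A` if and only if the induced operator `P` on `A ⊗ 𝔽Ω` is a
Rota-Baxter operator of weight `q`. -/
theorem stmt_1 {F : Type*} [Field F] {Ω : Type*} [Semigroup Ω]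
    {A : Type*} [AddCommGroup A] [Module F A] (q : F)
    (D : A →ₗ[F] A) (mul : F → A → A → A)
    (hadd1 : ∀ (l : F) (a a' b : A), mul l (a + a') b = mul l a b + mul l a' b)
    (hsmul1 : ∀ (l c : F) (a b : A), mul l (c • a) b = c • mul l a b)
    (hadd2 : ∀ (l : F) (a b b' : A), mul l a (b + b') = mul l a b + mul l a b')
    (hsmul2 : ∀ (l c : F) (a b : A), mul l a (c • b) = c • mul l a b)
    (hsesq1 : ∀ (l : F) (a b : A), mul l (D a) b = -l • mul l a b)
    (hsesq2 : ∀ (l : F) (a b : A), mul l a (D b) = D (mul l a b) + l • mul l a b)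
    (hassoc : ∀ (l m : F) (a b c : A), mul (l + m) (mul l a b) c = mul l a (mul m b c))
    (P : Ω → A →ₗ[F] A) (hPD : ∀ ω, (P ω) ∘ₗ D = D ∘ₗ (P ω)) :
    (∀ (l : F) (α β : Ω) (a b : A),
        mul l (P α a) (P β b)
          = P (α * β) (mul l (P α a) b + mul l a (P β b) + q • mul l a b))
      ↔ (∀ (l : F) (u v : Ω →₀ A),
          mulV mul l (PV P u) (PV P v)
            = PV P (mulV mul l (PV P u) v + mulV mul l u (PV P v)
                + q • mulV mul l u v)) := by
  constructor
  · intro h l u v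
    induction u using Finsupp.induction_linear with
    | zero =>
        simp [PV_zero, mulV_zero_left]
    | add f g hf hg =>
        rw [PV_add, mulV_add_left mul hadd1, mulV_add_left mul hadd1,
          mulV_add_left mul hadd1, mulV_add_left mul hadd1, smul_add, hf, hg, ← PV_add]
        congr 1
        abel
    | single α a =>
        induction v using Finsupp.induction_linear with
        | zero =>
            simp [PV_zero, mulV_zero_right]
        | add f g hf hg =>
            rw [PV_add, mulV_add_right mul hadd2, mulV_add_right mul hadd2,
              mulV_add_right mul hadd2, mulV_add_right mul hadd2, smul_add, hf, hg, ← PV_add]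
            congr 1
            abel
        | single β b =>
            rw [PV_single, PV_single,
              mulV_single_single mul hadd1 hadd2,
              mulV_single_single mul hadd1 hadd2,
              mulV_single_single mul hadd1 hadd2,
              mulV_single_single mul hadd1 hadd2,
              Finsupp.smul_single, ← Finsupp.single_add, ← Finsupp.single_add,
              PV_single]
            rw [h]
  · intro h l α β a b
    have := h l (Finsupp.single α a) (Finsupp.single β b)
    rw [PV_single, PV_single,
      mulV_single_single mul hadd1 hadd2,
      mulV_single_single mul hadd1 hadd2,
      mulV_single_single mul hadd1 hadd2,
      mulV_single_single mul hadd1 hadd2,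
      Finsupp.smul_single, ← Finsupp.single_add, ← Finsupp.single_add,
      PV_single] at this
    exact Finsupp.single_injective _ this
end

section
/- Let (A, ·, (P_ω)) and (B, ·, (Q_ω)) be associative conformal algebras over 𝔽, each equipped with a Rota-Baxter family operator of weight q indexed by a semigroup Ω. Equip A ⊗_𝔽 B, for each λ ∈ 𝔽, with the bilinear product determined by (a₁ ⊗ b₁) ·_λ (a₂ ⊗ b₂) = (a₁ ·_λ a₂) ⊗ (b₁ ·_λ b₂), and define R_ω : A ⊗ B → A ⊗ B as the linear map with R_ω(a ⊗ b) = P_ω(a) ⊗ b. Then (R_ω)_{ω∈Ω} satisfies the Rota-Baxter family identity of weight q on A ⊗ B: R_α(u) ·_λ R_β(v) = R_{αβ}( R_α(u) ·_λ v + u ·_λ R_β(v) + q (u ·_λ v) ) for all u, v ∈ A ⊗ B, λ ∈ 𝔽, α, β ∈ Ω. -/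
open TensorProduct

/-- The `λ`-product on `A ⊗ B` determined by
`(a₁ ⊗ b₁) ·_λ (a₂ ⊗ b₂) = (a₁ ·_λ a₂) ⊗ (b₁ ·_λ b₂)`. -/
noncomputable def mulAB {F : Type*} [Field F]
    {A B : Type*} [AddCommGroup A] [Module F A] [AddCommGroup B] [Module F B]
    (mulA : F → A →ₗ[F] A →ₗ[F] A) (mulB : F → B →ₗ[F] B →ₗ[F] B) (l : F) :
    A ⊗[F] B →ₗ[F] A ⊗[F] B →ₗ[F] A ⊗[F] B :=
  TensorProduct.map₂ (mulA l) (mulB l)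

/-- The operator `R_ω` on `A ⊗ B` determined by `R_ω(a ⊗ b) = P_ω(a) ⊗ b`. -/
noncomputable def Rfam {F : Type*} [Field F]
    {A B : Type*} [AddCommGroup A] [Module F A] [AddCommGroup B] [Module F B]
    {Ω : Type*} (P : Ω → A →ₗ[F] A) (ω : Ω) : A ⊗[F] B →ₗ[F] A ⊗[F] B :=
  TensorProduct.map (P ω) LinearMap.id

/-- If `(A, ·, (P_ω))` and `(B, ·, (Q_ω))` are associative conformal algebras with
Rota-Baxter family operators of weight `q`, then `(R_ω)` with `R_ω(a ⊗ b) = P_ω(a) ⊗ b`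
satisfies the Rota-Baxter family identity of weight `q` on `A ⊗ B`. -/
theorem stmt_2 {F : Type*} [Field F] {Ω : Type*} [Semigroup Ω]
    {A B : Type*} [AddCommGroup A] [Module F A] [AddCommGroup B] [Module F B] (q : F)
    (DA : A →ₗ[F] A) (DB : B →ₗ[F] B)
    (mulA : F → A →ₗ[F] A →ₗ[F] A) (mulB : F → B →ₗ[F] B →ₗ[F] B)
    (hA1 : ∀ (l : F) (a b : A), mulA l (DA a) b = -l • mulA l a b)
    (hA2 : ∀ (l : F) (a b : A), mulA l a (DA b) = DA (mulA l a b) + l • mulA l a b)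
    (hA3 : ∀ (l m : F) (a b c : A),
      mulA (l + m) (mulA l a b) c = mulA l a (mulA m b c))
    (hB1 : ∀ (l : F) (a b : B), mulB l (DB a) b = -l • mulB l a b)
    (hB2 : ∀ (l : F) (a b : B), mulB l a (DB b) = DB (mulB l a b) + l • mulB l a b)
    (hB3 : ∀ (l m : F) (a b c : B),
      mulB (l + m) (mulB l a b) c = mulB l a (mulB m b c))
    (P : Ω → A →ₗ[F] A) (hPD : ∀ ω, (P ω) ∘ₗ DA = DA ∘ₗ (P ω))
    (hP : ∀ (l : F) (α β : Ω) (a b : A),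
      mulA l (P α a) (P β b)
        = P (α * β) (mulA l (P α a) b + mulA l a (P β b) + q • mulA l a b))
    (Q : Ω → B →ₗ[F] B) (hQD : ∀ ω, (Q ω) ∘ₗ DB = DB ∘ₗ (Q ω))
    (hQ : ∀ (l : F) (α β : Ω) (a b : B),
      mulB l (Q α a) (Q β b)
        = Q (α * β) (mulB l (Q α a) b + mulB l a (Q β b) + q • mulB l a b)) :
    ∀ (l : F) (α β : Ω) (u v : A ⊗[F] B),
      mulAB mulA mulB l (Rfam P α u) (Rfam P β v)
        = Rfam P (α * β)
            (mulAB mulA mulB l (Rfam P α u) v + mulAB mulA mulB l u (Rfam P β v)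
              + q • mulAB mulA mulB l u v) := by
  intro l α β u v
  induction u using TensorProduct.induction_on with
  | zero => simp
  | tmul a b =>
    induction v using TensorProduct.induction_on with
    | zero => simp
    | tmul a' b' =>
      simp only [mulAB, Rfam, TensorProduct.map_tmul, LinearMap.id_coe, id_eq,
        TensorProduct.map₂_apply_tmul, hP, map_add,
        TensorProduct.add_tmul, TensorProduct.smul_tmul', LinearMap.map_smul]
    | add x y hx hy =>
      simp only [map_add, LinearMap.add_apply, smul_add, hx, hy]
      abel
  | add x y hx hy =>
    simp only [map_add, LinearMap.add_apply, smul_add, hx, hy]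
    abel
end

section
/- Let A be an associative conformal algebra over 𝔽, Ω a semigroup, and (d_ω)_{ω∈Ω} a family of bijective linear maps d_ω : A → A with d_ω ∘ ∂ = ∂ ∘ d_ω, forming a differential family of weight q, i.e. d_{αβ}(a ·_λ b) = d_α(a) ·_λ b + a ·_λ d_β(b) + q (d_α(a) ·_λ d_β(b)) for all a, b ∈ A, λ ∈ 𝔽, α, β ∈ Ω. Then the family of inverses (d_ω^{-1})_{ω∈Ω} is a Rota-Baxter family operator of weight q on A: d_α^{-1}(u) ·_λ d_β^{-1}(v) = d_{αβ}^{-1}( d_α^{-1}(u) ·_λ v + u ·_λ d_β^{-1}(v) + q (u ·_λ v) ) for all u, v ∈ A, λ ∈ 𝔽, α, β ∈ Ω. -/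
/-- If `(d_ω)_{ω∈Ω}` is a family of bijective linear maps commuting with `∂` forming a
differential family of weight `q` on an associative conformal algebra `A`, then the
family of inverses `(d_ω⁻¹)_{ω∈Ω}` is a Rota-Baxter family operator of weight `q`. -/
theorem stmt_3 {F : Type*} [Field F] {Ω : Type*} [Semigroup Ω]
    {A : Type*} [AddCommGroup A] [Module F A] (q : F)
    (D : A →ₗ[F] A) (mul : F → A → A → A)
    (hadd1 : ∀ (l : F) (a a' b : A), mul l (a + a') b = mul l a b + mul l a' b)
    (hsmul1 : ∀ (l c : F) (a b : A), mul l (c • a) b = c • mul l a b)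
    (hadd2 : ∀ (l : F) (a b b' : A), mul l a (b + b') = mul l a b + mul l a b')
    (hsmul2 : ∀ (l c : F) (a b : A), mul l a (c • b) = c • mul l a b)
    (hsesq1 : ∀ (l : F) (a b : A), mul l (D a) b = -l • mul l a b)
    (hsesq2 : ∀ (l : F) (a b : A), mul l a (D b) = D (mul l a b) + l • mul l a b)
    (hassoc : ∀ (l m : F) (a b c : A), mul (l + m) (mul l a b) c = mul l a (mul m b c))
    (d : Ω → A ≃ₗ[F] A)
    (hdD : ∀ (ω : Ω) (a : A), d ω (D a) = D (d ω a))
    (hdiff : ∀ (l : F) (α β : Ω) (a b : A),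
      d (α * β) (mul l a b)
        = mul l (d α a) b + mul l a (d β b) + q • mul l (d α a) (d β b)) :
    ∀ (l : F) (α β : Ω) (u v : A),
      mul l ((d α).symm u) ((d β).symm v)
        = (d (α * β)).symm
            (mul l ((d α).symm u) v + mul l u ((d β).symm v) + q • mul l u v) := by
  intro l α β u v
  rw [LinearEquiv.eq_symm_apply, hdiff, LinearEquiv.apply_symm_apply, LinearEquiv.apply_symm_apply]
  abel
end

section
/- Let A be an associative conformal algebra over 𝔽, M a conformal bimodule over A, Ω a semigroup, (P_ω)_{ω∈Ω} a Rota-Baxter family operator of weight q on A, and (P_{M,ω})_{ω∈Ω} a family of linear maps M → M commuting with ∂. Equip A ⊕ M with the semidirect-product λ-products (a, m) •_λ (b, n) := (a ·_λ b, a ·_λ n + m ·_λ b) and define 𝒫_ω(a, m) := (P_ω(a), P_{M,ω}(m)). Then (𝒫_ω)_{ω∈Ω} is a Rota-Baxter family operator of weight q on A ⊕ M if and only if for all a ∈ A, m ∈ M, λ ∈ 𝔽, α, β ∈ Ω: P_α(a) ·_λ P_{M,β}(m) = P_{M,αβ}( a ·_λ P_{M,β}(m) + P_α(a) ·_λ m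 + q (a ·_λ m) ) and P_{M,α}(m) ·_λ P_β(a) = P_{M,αβ}( m ·_λ P_β(a) + P_{M,α}(m) ·_λ a + q (m ·_λ a) ), i.e. if and only if (M, (P_{M,ω})) is a Rota-Baxter family conformal bimodule over (A, (P_ω)). -/
/-- The axioms of an associative conformal algebra over `F`, for a plain-function
family of `λ`-products. -/
def ConfAlgFun {F : Type*} [Field F] {A : Type*} [AddCommGroup A] [Module F A]
    (D : A → A) (mul : F → A → A → A) : Prop :=
  (∀ a a' : A, D (a + a') = D a + D a') ∧
  (∀ (c : F) (a : A), D (c • a) = c • D a) ∧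
  (∀ (l : F) (a a' b : A), mul l (a + a') b = mul l a b + mul l a' b) ∧
  (∀ (l c : F) (a b : A), mul l (c • a) b = c • mul l a b) ∧
  (∀ (l : F) (a b b' : A), mul l a (b + b') = mul l a b + mul l a b') ∧
  (∀ (l c : F) (a b : A), mul l a (c • b) = c • mul l a b) ∧
  (∀ (l : F) (a b : A), mul l (D a) b = -l • mul l a b) ∧
  (∀ (l : F) (a b : A), mul l a (D b) = D (mul l a b) + l • mul l a b) ∧
  (∀ (l m : F) (a b c : A), mul (l + m) (mul l a b) c = mul l a (mul m b c))

/-- The axioms of a conformal bimodule `M` over an associative conformal algebra `A`. -/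
def ConfBimodFun {F : Type*} [Field F] {A M : Type*} [AddCommGroup A] [Module F A]
    [AddCommGroup M] [Module F M]
    (D : A → A) (DM : M → M) (mul : F → A → A → A)
    (al : F → A → M → M) (ar : F → M → A → M) : Prop :=
  (∀ u u' : M, DM (u + u') = DM u + DM u') ∧
  (∀ (c : F) (u : M), DM (c • u) = c • DM u) ∧
  (∀ (l : F) (a a' : A) (u : M), al l (a + a') u = al l a u + al l a' u) ∧
  (∀ (l c : F) (a : A) (u : M), al l (c • a) u = c • al l a u) ∧
  (∀ (l : F) (a : A) (u u' : M), al l a (u + u') = al l a u + al l a u') ∧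
  (∀ (l c : F) (a : A) (u : M), al l a (c • u) = c • al l a u) ∧
  (∀ (l : F) (u : M) (a a' : A), ar l u (a + a') = ar l u a + ar l u a') ∧
  (∀ (l c : F) (u : M) (a : A), ar l u (c • a) = c • ar l u a) ∧
  (∀ (l : F) (u u' : M) (a : A), ar l (u + u') a = ar l u a + ar l u' a) ∧
  (∀ (l c : F) (u : M) (a : A), ar l (c • u) a = c • ar l u a) ∧
  (∀ (l : F) (a : A) (u : M), al l (D a) u = -l • al l a u) ∧
  (∀ (l : F) (a : A) (u : M), al l a (DM u) = DM (al l a u) + l • al l a u) ∧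
  (∀ (l : F) (u : M) (a : A), ar l (DM u) a = -l • ar l u a) ∧
  (∀ (l : F) (u : M) (a : A), ar l u (D a) = DM (ar l u a) + l • ar l u a) ∧
  (∀ (l m : F) (a b : A) (u : M), al (l + m) (mul l a b) u = al l a (al m b u)) ∧
  (∀ (l m : F) (a : A) (u : M) (b : A), ar (l + m) (al l a u) b = al l a (ar m u b)) ∧
  (∀ (l m : F) (u : M) (a b : A), ar (l + m) (ar l u a) b = ar l u (mul m a b))

/-- A Rota-Baxter family operator of weight `q` (for plain-function operators):
linearity, commutation with `∂`, and the Rota-Baxter family identity. -/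
def IsRBFamOp {F : Type*} [Field F] {Ω : Type*} [Semigroup Ω]
    {A : Type*} [AddCommGroup A] [Module F A]
    (D : A → A) (mul : F → A → A → A) (q : F) (P : Ω → A → A) : Prop :=
  (∀ (ω : Ω) (a a' : A), P ω (a + a') = P ω a + P ω a') ∧
  (∀ (ω : Ω) (c : F) (a : A), P ω (c • a) = c • P ω a) ∧
  (∀ (ω : Ω) (a : A), P ω (D a) = D (P ω a)) ∧
  (∀ (l : F) (α β : Ω) (a b : A),
    mul l (P α a) (P β b)
      = P (α * β) (mul l (P α a) b + mul l a (P β b) + q • mul l a b))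

/-- Semidirect-product construction: `(𝒫_ω)(a,m) = (P_ω(a), P_{M,ω}(m))` is a
Rota-Baxter family operator of weight `q` on `A ⊕ M` if and only if
`(M, (P_{M,ω}))` is a Rota-Baxter family conformal bimodule over `(A, (P_ω))`. -/
theorem stmt_5 {F : Type*} [Field F] {Ω : Type*} [Semigroup Ω]
    {A M : Type*} [AddCommGroup A] [Module F A] [AddCommGroup M] [Module F M] (q : F)
    (D : A → A) (DM : M → M) (mul : F → A → A → A)
    (al : F → A → M → M) (ar : F → M → A → M)
    (hA : ConfAlgFun D mul)
    (hM : ConfBimodFun D DM mul al ar)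
    (P : Ω → A → A) (hP : IsRBFamOp D mul q P)
    (PM : Ω → M → M)
    (hPMadd : ∀ (ω : Ω) (u u' : M), PM ω (u + u') = PM ω u + PM ω u')
    (hPMsmul : ∀ (ω : Ω) (c : F) (u : M), PM ω (c • u) = c • PM ω u)
    (hPMD : ∀ (ω : Ω) (u : M), PM ω (DM u) = DM (PM ω u)) :
    IsRBFamOp (F := F) (fun u : A × M => (D u.1, DM u.2))
        (fun l u v => (mul l u.1 v.1, al l u.1 v.2 + ar l u.2 v.1)) q
        (fun ω u => (P ω u.1, PM ω u.2))
      ↔ ((∀ (l : F) (α β : Ω) (a : A) (u : M),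
            al l (P α a) (PM β u)
              = PM (α * β) (al l a (PM β u) + al l (P α a) u + q • al l a u)) ∧
         (∀ (l : F) (α β : Ω) (u : M) (a : A),
            ar l (PM α u) (P β a)
              = PM (α * β) (ar l u (P β a) + ar l (PM α u) a + q • ar l u a))) := by
  obtain ⟨_, _, mulAl, mulAsl, mulAr, mulAsr, _, _, _⟩ := hA
  obtain ⟨_, _, alAdda, alSmula, alAddu, alSmulu, arAdda, arSmula, arAddu, arSmulu,
    _, _, _, _, _, _, _⟩ := hM
  obtain ⟨Padd, Psmul, PD, Prb⟩ := hP
  have P0 : ∀ ω : Ω, P ω 0 = 0 := fun ω => by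
    simpa using Psmul ω 0 0
  have PM0 : ∀ ω : Ω, PM ω 0 = 0 := fun ω => by
    simpa using hPMsmul ω 0 0
  have mul0r : ∀ (l : F) (a : A), mul l a 0 = 0 := fun l a => by
    simpa using mulAsr l 0 a 0
  have mul0l : ∀ (l : F) (a : A), mul l 0 a = 0 := fun l a => by
    simpa using mulAsl l 0 0 a
  have al0r : ∀ (l : F) (a : A), al l a 0 = 0 := fun l a => by
    simpa using alSmulu l 0 a 0
  have al0l : ∀ (l : F) (u : M), al l 0 u = 0 := fun l u => by
    simpa using alSmula l 0 0 u
  have ar0r : ∀ (l : F) (u : M), ar l u 0 = 0 := fun l u => by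
    simpa using arSmula l 0 u 0
  have ar0l : ∀ (l : F) (a : A), ar l 0 a = 0 := fun l a => by
    simpa using arSmulu l 0 0 a
  constructor
  · rintro ⟨_, _, _, hrb⟩
    constructor
    · intro l α β a u
      have h := congrArg Prod.snd (hrb l α β (a, 0) (0, u))
      simp only [Prod.smul_mk, smul_zero, Prod.mk_add_mk, add_zero, zero_add] at h
      simp only [P0, PM0, mul0r, mul0l, al0r, al0l, ar0r, ar0l, add_zero, zero_add,
        smul_zero] at h
      rw [h]; congr 1; abel
    · intro l α β u a
      have h := congrArg Prod.snd (hrb l α β (0, u) (a, 0))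
      simp only [Prod.smul_mk, smul_zero, Prod.mk_add_mk, add_zero, zero_add] at h
      simp only [P0, PM0, mul0r, mul0l, al0r, al0l, ar0r, ar0l, add_zero, zero_add,
        smul_zero] at h
      rw [h]; congr 1; abel
  · rintro ⟨h1, h2⟩
    refine ⟨?_, ?_, ?_, ?_⟩
    · intro ω u v
      simp [Prod.ext_iff, Padd, hPMadd]
    · intro ω c u
      simp [Prod.ext_iff, Psmul, hPMsmul]
    · intro ω u
      simp [Prod.ext_iff, PD, hPMD]
    · intro l α β u v
      refine Prod.ext ?_ ?_
      · simpa using Prb l α β u.1 v.1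
      · show al l (P α u.1) (PM β v.2) + ar l (PM α u.2) (P β v.1) = _
        rw [h1, h2, ← hPMadd]
        simp only [Prod.smul_mk, Prod.mk_add_mk]
        congr 1
        simp only [smul_add]
        abel
end

section
/- Let (A, ·, (P_ω)) be a Rota-Baxter family Ω-associative conformal algebra of weight q over a field 𝔽, and define a ⋆_{λ;α,β} b := a ·_{λ;α,β} P_β(b) + P_α(a) ·_{λ;α,β} b + q (a ·_{λ;α,β} b). Then: (1) (A, ∂, ⋆) is an Ω-associative conformal algebra; (2) (P_ω)_{ω∈Ω} is a Rota-Baxter family operator of weight q for the product ⋆, i.e. P_α(a) ⋆_{λ;α,β} P_β(b) = P_{αβ}( P_α(a) ⋆_{λ;α,β} b + a ⋆_{λ;α,β} P_β(b) + q (a ⋆_{λ;α,β} b) ); and (3) (P_ω) is a morphism from (A, ⋆, (P_ω)) to (A, ·, (P_ω)), i.e. P_{αβ}(a ⋆_{λ;α,β} b) = P_α(a) ·_{λ;α,β} P_β(b), for all a, b ∈ A, λ ∈ 𝔽, α, β ∈ Ω. -/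
/-- The axioms of an `Ω`-associative conformal algebra over `F`, for a plain-function
family of products `a ·_{λ;α,β} b`: bilinearity, conformal sesquilinearity and
`Ω`-associativity. -/
def OmegaConfFun {F : Type*} [Field F] {Ω : Type*} [Semigroup Ω]
    {A : Type*} [AddCommGroup A] [Module F A]
    (D : A → A) (mul : F → Ω → Ω → A → A → A) : Prop :=
  (∀ a a' : A, D (a + a') = D a + D a') ∧
  (∀ (c : F) (a : A), D (c • a) = c • D a) ∧
  (∀ (l : F) (α β : Ω) (a a' b : A),
    mul l α β (a + a') b = mul l α β a b + mul l α β a' b) ∧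
  (∀ (l c : F) (α β : Ω) (a b : A), mul l α β (c • a) b = c • mul l α β a b) ∧
  (∀ (l : F) (α β : Ω) (a b b' : A),
    mul l α β a (b + b') = mul l α β a b + mul l α β a b') ∧
  (∀ (l c : F) (α β : Ω) (a b : A), mul l α β a (c • b) = c • mul l α β a b) ∧
  (∀ (l : F) (α β : Ω) (a b : A), mul l α β (D a) b = -l • mul l α β a b) ∧
  (∀ (l : F) (α β : Ω) (a b : A),
    mul l α β a (D b) = D (mul l α β a b) + l • mul l α β a b) ∧
  (∀ (l m : F) (α β γ : Ω) (a b c : A),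
    mul (l + m) (α * β) γ (mul l α β a b) c = mul l α (β * γ) a (mul m β γ b c))

/-- A Rota-Baxter family operator of weight `q` on an `Ω`-associative conformal
algebra, for plain-function operators: linearity, commutation with `∂`, and the
Rota-Baxter family identity. -/
def IsRBFamilyOp {F : Type*} [Field F] {Ω : Type*} [Semigroup Ω]
    {A : Type*} [AddCommGroup A] [Module F A]
    (D : A → A) (mul : F → Ω → Ω → A → A → A) (q : F) (P : Ω → A → A) : Prop :=
  (∀ (ω : Ω) (a a' : A), P ω (a + a') = P ω a + P ω a') ∧
  (∀ (ω : Ω) (c : F) (a : A), P ω (c • a) = c • P ω a) ∧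
  (∀ (ω : Ω) (a : A), P ω (D a) = D (P ω a)) ∧
  (∀ (l : F) (α β : Ω) (a b : A),
    mul l α β (P α a) (P β b)
      = P (α * β) (mul l α β (P α a) b + mul l α β a (P β b) + q • mul l α β a b))

/-- For a Rota-Baxter family `Ω`-associative conformal algebra `(A, ·, (P_ω))` of
weight `q`, the product `a ⋆_{λ;α,β} b = a ·_{λ;α,β} P_β(b) + P_α(a) ·_{λ;α,β} b
+ q (a ·_{λ;α,β} b)` makes `A` an `Ω`-associative conformal algebra, `(P_ω)` is a
Rota-Baxter family operator of weight `q` for `⋆`, and `(P_ω)` is a morphism from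
`(A, ⋆, (P_ω))` to `(A, ·, (P_ω))`. -/
theorem stmt_6 {F : Type*} [Field F] {Ω : Type*} [Semigroup Ω]
    {A : Type*} [AddCommGroup A] [Module F A] (q : F)
    (D : A → A) (mul : F → Ω → Ω → A → A → A)
    (hA : OmegaConfFun D mul)
    (P : Ω → A → A) (hP : IsRBFamilyOp D mul q P) :
    OmegaConfFun D
        (fun l α β a b =>
          mul l α β a (P β b) + mul l α β (P α a) b + q • mul l α β a b)
      ∧ IsRBFamilyOp D
          (fun l α β a b =>
            mul l α β a (P β b) + mul l α β (P α a) b + q • mul l α β a b)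
          q P
      ∧ (∀ (l : F) (α β : Ω) (a b : A),
          P (α * β)
              (mul l α β a (P β b) + mul l α β (P α a) b + q • mul l α β a b)
            = mul l α β (P α a) (P β b)) := by
  obtain ⟨hDadd, hDsmul, haddl, hsmull, haddr, hsmulr, hDl, hDr, hassoc⟩ := hA
  obtain ⟨hPadd, hPsmul, hPD, hRB⟩ := hP
  have hmorph : ∀ (l : F) (α β : Ω) (a b : A),
      P (α * β) (mul l α β a (P β b) + mul l α β (P α a) b + q • mul l α β a b)
        = mul l α β (P α a) (P β b) := by
    intro l α β a b
    rw [hRB]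
    congr 1
    abel
  refine ⟨⟨?_, ?_, ?_, ?_, ?_, ?_, ?_, ?_, ?_⟩, ⟨?_, ?_, ?_, ?_⟩, hmorph⟩
  · exact hDadd
  · exact hDsmul
  · intro l α β a a' b
    simp only [haddl, hPadd, hsmulr, smul_add]
    abel
  · intro l c α β a b
    simp only [hsmull, hPsmul, smul_add, smul_comm c q]
  · intro l α β a b b'
    simp only [haddr, hPadd, hsmulr, smul_add]
    abel
  · intro l c α β a b
    simp only [hsmulr, hPsmul, smul_add, smul_comm c q]
  · intro l α β a b
    simp only [hDl, hPD, smul_add, smul_comm q (-l)]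
  · intro l α β a b
    simp only [hDr, hPD, smul_add, hDadd, hDsmul, smul_comm q l]
    abel
  · intro l m α β γ a b c
    simp only [hmorph]
    simp only [haddl, haddr, hsmull, hsmulr, smul_add, hassoc, smul_smul]
    abel
  · exact hPadd
  · exact hPsmul
  · exact hPD
  · intro l α β a b
    simp only []
    rw [hRB l α β a (P β b), hRB l α β (P α a) b, hRB l α β a b]
    simp only [hPadd, hPsmul, smul_add, smul_smul]
    abel
end

section
/- Let A be an Ω-associative conformal algebra over a field 𝔽 and (N_ω)_{ω∈Ω} a Nijenhuis family on A. Then: (1) the products a ∘^N_{λ;α,β} b := N_α(a) ·_{λ;α,β} b + a ·_{λ;α,β} N_β(b) − N_{αβ}(a ·_{λ;α,β} b) make (A, ∂, ∘^N) an Ω-associative conformal algebra; and (2) (N_ω) is an algebra homomorphism from (A, ∘^N) to (A, ·): N_{αβ}(a ∘^N_{λ;α,β} b) = N_α(a) ·_{λ;α,β} N_β(b) for all a, b ∈ A, λ ∈ 𝔽, α, β ∈ Ω. -/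
/-- If `(N_ω)` is a Nijenhuis family on an `Ω`-associative conformal algebra `A`, then
the deformed products `a ∘^N_{λ;α,β} b = N_α(a)·b + a·N_β(b) − N_{αβ}(a·b)` make `A`
an `Ω`-associative conformal algebra, and `(N_ω)` is an algebra homomorphism from
`(A, ∘^N)` to `(A, ·)`. -/
theorem stmt_9 {F : Type*} [Field F] {Ω : Type*} [Semigroup Ω]
    {A : Type*} [AddCommGroup A] [Module F A]
    (D : A → A) (mul : F → Ω → Ω → A → A → A)
    (hA : OmegaConfFun D mul)
    (N : Ω → A → A)
    (hNadd : ∀ (ω : Ω) (a a' : A), N ω (a + a') = N ω a + N ω a')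
    (hNsmul : ∀ (ω : Ω) (c : F) (a : A), N ω (c • a) = c • N ω a)
    (hND : ∀ (ω : Ω) (a : A), N ω (D a) = D (N ω a))
    (hNij : ∀ (l : F) (α β : Ω) (a b : A),
      mul l α β (N α a) (N β b)
        = N (α * β)
            (mul l α β (N α a) b + mul l α β a (N β b) - N (α * β) (mul l α β a b))) :
    OmegaConfFun D
        (fun l α β a b =>
          mul l α β (N α a) b + mul l α β a (N β b) - N (α * β) (mul l α β a b))
      ∧ (∀ (l : F) (α β : Ω) (a b : A),
          N (α * β)
              (mul l α β (N α a) b + mul l α β a (N β b)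
                - N (α * β) (mul l α β a b))
            = mul l α β (N α a) (N β b)) := by
  obtain ⟨hDadd, hDsmul, hal, hsl, har, hsr, hDl, hDr, hassoc⟩ := hA
  have hDsub : ∀ a a' : A, D (a - a') = D a - D a' := by
    intro a a'
    rw [sub_eq_add_neg, hDadd, ← neg_one_smul F a', hDsmul, neg_one_smul,
      ← sub_eq_add_neg]
  have hNsub : ∀ (ω : Ω) (a a' : A), N ω (a - a') = N ω a - N ω a' := by
    intro ω a a'
    rw [sub_eq_add_neg, hNadd, ← neg_one_smul F a', hNsmul, neg_one_smul,
      ← sub_eq_add_neg]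
  have hmsubl : ∀ (l : F) (α β : Ω) (a a' b : A),
      mul l α β (a - a') b = mul l α β a b - mul l α β a' b := by
    intro l α β a a' b
    rw [sub_eq_add_neg, hal, ← neg_one_smul F a', hsl, neg_one_smul,
      ← sub_eq_add_neg]
  have hmsubr : ∀ (l : F) (α β : Ω) (a b b' : A),
      mul l α β a (b - b') = mul l α β a b - mul l α β a b' := by
    intro l α β a b b'
    rw [sub_eq_add_neg, har, ← neg_one_smul F b', hsr, neg_one_smul,
      ← sub_eq_add_neg]
  refine ⟨⟨hDadd, hDsmul, ?_, ?_, ?_, ?_, ?_, ?_, ?_⟩,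
    fun l α β a b => (hNij l α β a b).symm⟩
  · intro l α β a a' b
    simp only [hNadd, hal, har, hNsub]
    abel
  · intro l c α β a b
    simp only [hNsmul, hsl, hsr, hNsub, smul_add, smul_sub]
  · intro l α β a b b'
    simp only [hNadd, hal, har, hNsub]
    abel
  · intro l c α β a b
    simp only [hNsmul, hsl, hsr, hNsub, smul_add, smul_sub]
  · intro l α β a b
    simp only [hND, hDl, hNsmul, smul_add, smul_sub]
  · intro l α β a b
    simp only [hND, hDr, hNadd, hNsmul, hDadd, hDsub, smul_add, smul_sub]
    abel
  · intro l m α β γ a b c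
    simp only []
    rw [← hNij l α β a b, ← hNij m β γ b c]
    simp only [hal, har, hmsubl, hmsubr, hNadd, hNsub]
    rw [hNij (l + m) (α * β) γ (mul l α β a b) c,
      hNij l α (β * γ) a (mul m β γ b c)]
    simp only [hNadd, hNsub, hassoc, mul_assoc]
    abel
end

section
/- Let A be an Ω-associative conformal algebra over a field 𝔽 and (N_ω)_{ω∈Ω} a Nijenhuis family on A; set ω^N_{λ;α,β}(a, b) := N_α(a) ·_{λ;α,β} b + a ·_{λ;α,β} N_β(b) − N_{αβ}(a ·_{λ;α,β} b). Then ω^N is a trivial deformation of A: for every t ∈ 𝔽, the products a ∘ᵗ_{λ;α,β} b := a ·_{λ;α,β} b + t ω^N_{λ;α,β}(a, b) make (A, ∂, ∘ᵗ) an Ω-associative conformal algebra, and the maps T_{t,ω} := id_A + t N_ω satisfy T_{t,αβ}(a ∘ᵗ_{λ;α,β} b) = T_{t,α}(a) ·_{λ;α,β} T_{t,β}(b) for all a, b ∈ A, λ ∈ 𝔽, α, β ∈ Ω. -/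
/-- If `(N_ω)` is a Nijenhuis family on an `Ω`-associative conformal algebra `A`, then
`ω^N(a,b) = N_α(a)·b + a·N_β(b) − N_{αβ}(a·b)` is a trivial deformation of `A`:
for every `t`, the products `a ∘ᵗ b = a·b + t ω^N(a,b)` make `A` an `Ω`-associative
conformal algebra, and `T_{t,ω} = id + t N_ω` satisfies
`T_{t,αβ}(a ∘ᵗ b) = T_{t,α}(a) · T_{t,β}(b)`. -/
theorem stmt_10 {F : Type*} [Field F] {Ω : Type*} [Semigroup Ω]
    {A : Type*} [AddCommGroup A] [Module F A]
    (D : A → A) (mul : F → Ω → Ω → A → A → A)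
    (hA : OmegaConfFun D mul)
    (N : Ω → A → A)
    (hNadd : ∀ (ω : Ω) (a a' : A), N ω (a + a') = N ω a + N ω a')
    (hNsmul : ∀ (ω : Ω) (c : F) (a : A), N ω (c • a) = c • N ω a)
    (hND : ∀ (ω : Ω) (a : A), N ω (D a) = D (N ω a))
    (hNij : ∀ (l : F) (α β : Ω) (a b : A),
      mul l α β (N α a) (N β b)
        = N (α * β)
            (mul l α β (N α a) b + mul l α β a (N β b) - N (α * β) (mul l α β a b))) :
    ∀ t : F,
      OmegaConfFun D
          (fun l α β a b =>
            mul l α β a b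
              + t • (mul l α β (N α a) b + mul l α β a (N β b)
                  - N (α * β) (mul l α β a b)))
        ∧ (∀ (l : F) (α β : Ω) (a b : A),
            (mul l α β a b
                + t • (mul l α β (N α a) b + mul l α β a (N β b)
                    - N (α * β) (mul l α β a b)))
              + t • N (α * β)
                  (mul l α β a b
                    + t • (mul l α β (N α a) b + mul l α β a (N β b)
                        - N (α * β) (mul l α β a b)))
              = mul l α β (a + t • N α a) (b + t • N β b)) := by
  obtain ⟨hDadd, hDsmul, hal, hsl, har, hsr, hq1, hq2, hassoc⟩ := hA
  have hNsub : ∀ (ω : Ω) (x y : A), N ω (x - y) = N ω x - N ω y := by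
    intro ω x y
    rw [sub_eq_add_neg, hNadd, ← neg_one_smul F y, hNsmul, neg_one_smul, ← sub_eq_add_neg]
  have hDsub : ∀ (x y : A), D (x - y) = D x - D y := by
    intro x y
    rw [sub_eq_add_neg, hDadd, ← neg_one_smul F y, hDsmul, neg_one_smul, ← sub_eq_add_neg]
  have hmls : ∀ (l : F) (α β : Ω) (x y b : A),
      mul l α β (x - y) b = mul l α β x b - mul l α β y b := by
    intro l α β x y b
    rw [sub_eq_add_neg, hal, ← neg_one_smul F y, hsl, neg_one_smul, ← sub_eq_add_neg]
  have hmrs : ∀ (l : F) (α β : Ω) (a x y : A),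
      mul l α β a (x - y) = mul l α β a x - mul l α β a y := by
    intro l α β a x y
    rw [sub_eq_add_neg, har, ← neg_one_smul F y, hsr, neg_one_smul, ← sub_eq_add_neg]
  intro t
  constructor
  · refine ⟨hDadd, hDsmul, ?_, ?_, ?_, ?_, ?_, ?_, ?_⟩
    · intro l α β a a' b
      simp only [hal, hNadd, hmls, hmrs, smul_add, smul_sub]
      module
    · intro l c α β a b
      simp only [hsl, hNsmul, hmls, hmrs, hNsub, smul_add, smul_sub, smul_smul]
      module
    · intro l α β a b b'
      simp only [har, hNadd, hmls, hmrs, smul_add, smul_sub]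
      module
    · intro l c α β a b
      simp only [hsr, hNsmul, hmls, hmrs, hNsub, smul_add, smul_sub, smul_smul]
      module
    · intro l α β a b
      simp only [hND, hq1, hNsmul, smul_add, smul_sub, smul_smul]
      module
    · intro l α β a b
      simp only [hND, hq2, hNadd, hNsmul, hDadd, hDsub, hDsmul, smul_add, smul_sub, smul_smul]
      module
    · intro l m α β γ a b c
      have h1 : mul (l + m) (α * β) γ (mul l α β (N α a) (N β b)) c
          = mul (l + m) (α * β) γ
              (N (α * β) (mul l α β (N α a) b + mul l α β a (N β b)
                - N (α * β) (mul l α β a b))) c := by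
        rw [hNij]
      have h2 : mul l α (β * γ) a (mul m β γ (N β b) (N γ c))
          = mul l α (β * γ) a
              (N (β * γ) (mul m β γ (N β b) c + mul m β γ b (N γ c)
                - N (β * γ) (mul m β γ b c))) := by
        rw [hNij]
      have h3 := hNij (l + m) (α * β) γ (mul l α β a b) c
      have h4 := hNij l α (β * γ) a (mul m β γ b c)
      simp only [hal, har, hsl, hsr, hmls, hmrs, hNadd, hNsub, hNsmul, hassoc, mul_assoc]
        at h1 h2 h3 h4 ⊢
      linear_combination (norm := module) - (t*t) • h1 + (t*t) • h2 - (t*t) • h3 + (t*t) • h4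
  · intro l α β a b
    simp only [hal, har, hsl, hsr, hNadd, hNsub, hNsmul, smul_add, smul_sub, smul_smul]
    rw [hNij]
    simp only [hNadd, hNsub, hNsmul, smul_add, smul_sub, smul_smul]
    module
end

section
/- Let A be an Ω-associative conformal algebra over a field 𝔽 and (N_ω)_{ω∈Ω} any family of linear maps N_ω : A → A with N_ω ∘ ∂ = ∂ ∘ N_ω; define a ∘^N_{λ;α,β} b := N_α(a) ·_{λ;α,β} b + a ·_{λ;α,β} N_β(b) − N_{αβ}(a ·_{λ;α,β} b). Then the compatibility identity (a ∘^N_{λ;α,β} b) ·_{λ+μ;αβ,γ} c + (a ·_{λ;α,β} b) ∘^N_{λ+μ;αβ,γ} c = a ·_{λ;α,βγ} (b ∘^N_{μ;β,γ} c) + a ∘^N_{λ;α,βγ} (b ·_{μ;β,γ} c) holds for all a, b, c ∈ A, λ, μ ∈ 𝔽, α, β, γ ∈ Ω. Consequently, if (N_ω) is moreover a Nijenhuis family, then for every t ∈ 𝔽 the products a ·_{λ;α,β} b + t (a ∘^N_{λ;α,β} b) are Ω-associative, i.e. ∘^N is compatible with the original product. -/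
/-- The deformed product `a ∘^N_{λ;α,β} b = N_α(a)·b + a·N_β(b) − N_{αβ}(a·b)`. -/
def nijProd {F : Type*} [Field F] {Ω : Type*} [Semigroup Ω]
    {A : Type*} [AddCommGroup A] [Module F A]
    (mul : F → Ω → Ω → A → A → A) (N : Ω → A → A)
    (l : F) (α β : Ω) (a b : A) : A :=
  mul l α β (N α a) b + mul l α β a (N β b) - N (α * β) (mul l α β a b)

/-- For any family `(N_ω)` of linear maps commuting with `∂` on an `Ω`-associative
conformal algebra `A`, the deformed product `∘^N` satisfies the compatibility identity
`(a ∘^N b)·c + (a·b) ∘^N c = a·(b ∘^N c) + a ∘^N (b·c)`; consequently, if `(N_ω)` is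
a Nijenhuis family, then for every `t` the products `a·b + t (a ∘^N b)` are
`Ω`-associative, i.e. `∘^N` is compatible with the original product. -/
theorem stmt_11 {F : Type*} [Field F] {Ω : Type*} [Semigroup Ω]
    {A : Type*} [AddCommGroup A] [Module F A]
    (D : A → A) (mul : F → Ω → Ω → A → A → A)
    (hA : OmegaConfFun D mul)
    (N : Ω → A → A)
    (hNadd : ∀ (ω : Ω) (a a' : A), N ω (a + a') = N ω a + N ω a')
    (hNsmul : ∀ (ω : Ω) (c : F) (a : A), N ω (c • a) = c • N ω a)
    (hND : ∀ (ω : Ω) (a : A), N ω (D a) = D (N ω a)) :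
    (∀ (l m : F) (α β γ : Ω) (a b c : A),
        mul (l + m) (α * β) γ (nijProd mul N l α β a b) c
            + nijProd mul N (l + m) (α * β) γ (mul l α β a b) c
          = mul l α (β * γ) a (nijProd mul N m β γ b c)
            + nijProd mul N l α (β * γ) a (mul m β γ b c))
      ∧ ((∀ (l : F) (α β : Ω) (a b : A),
            mul l α β (N α a) (N β b)
              = N (α * β)
                  (mul l α β (N α a) b + mul l α β a (N β b)
                    - N (α * β) (mul l α β a b)))
          → ∀ (t l m : F) (α β γ : Ω) (a b c : A),
              mul (l + m) (α * β) γ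
                  (mul l α β a b + t • nijProd mul N l α β a b) c
                + t • nijProd mul N (l + m) (α * β) γ
                    (mul l α β a b + t • nijProd mul N l α β a b) c
              = mul l α (β * γ) a
                  (mul m β γ b c + t • nijProd mul N m β γ b c)
                + t • nijProd mul N l α (β * γ) a
                    (mul m β γ b c + t • nijProd mul N m β γ b c)) := by

  obtain ⟨hD1, hD2, haddl, hsmull, haddr, hsmulr, hDl, hDr, hassoc⟩ := hA
  have hNneg : ∀ (ω : Ω) (a : A), N ω (-a) = - N ω a := by
    intro ω a; rw [← neg_one_smul F a, hNsmul, neg_one_smul]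
  have hNsub : ∀ (ω : Ω) (a b : A), N ω (a - b) = N ω a - N ω b := by
    intro ω a b; rw [sub_eq_add_neg, hNadd, hNneg, sub_eq_add_neg]
  have hmnegl : ∀ (l : F) (α β : Ω) (a b : A), mul l α β (-a) b = - mul l α β a b := by
    intro l α β a b; rw [← neg_one_smul F a, hsmull, neg_one_smul]
  have hmsubl : ∀ (l : F) (α β : Ω) (a a' b : A),
      mul l α β (a - a') b = mul l α β a b - mul l α β a' b := by
    intro l α β a a' b; rw [sub_eq_add_neg, haddl, hmnegl, sub_eq_add_neg]
  have hmnegr : ∀ (l : F) (α β : Ω) (a b : A), mul l α β a (-b) = - mul l α β a b := by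
    intro l α β a b; rw [← neg_one_smul F b, hsmulr, neg_one_smul]
  have hmsubr : ∀ (l : F) (α β : Ω) (a b b' : A),
      mul l α β a (b - b') = mul l α β a b - mul l α β a b' := by
    intro l α β a b b'; rw [sub_eq_add_neg, haddr, hmnegr, sub_eq_add_neg]
  have hcompat : ∀ (l m : F) (α β γ : Ω) (a b c : A),
      mul (l + m) (α * β) γ (nijProd mul N l α β a b) c
          + nijProd mul N (l + m) (α * β) γ (mul l α β a b) c
        = mul l α (β * γ) a (nijProd mul N m β γ b c)
          + nijProd mul N l α (β * γ) a (mul m β γ b c) := by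
    intro l m α β γ a b c
    simp only [nijProd, haddl, haddr, hmsubl, hmsubr, hNadd, hNsub, hassoc, mul_assoc]
    abel
  refine ⟨hcompat, ?_⟩
  intro hNij t l m α β γ a b c
  have hNassoc : nijProd mul N (l + m) (α * β) γ (nijProd mul N l α β a b) c
      = nijProd mul N l α (β * γ) a (nijProd mul N m β γ b c) := by
    simp only [nijProd]
    rw [← hNij l α β a b, ← hNij m β γ b c]
    simp only [haddl, haddr, hmsubl, hmsubr, hNadd, hNsub]
    rw [hNij (l + m) (α * β) γ (mul l α β a b) c, hNij l α (β * γ) a (mul m β γ b c)]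
    simp only [hNadd, hNsub, hassoc, mul_assoc]
    abel
  have h1 := hcompat l m α β γ a b c
  have h0 := hassoc l m α β γ a b c
  have hnal : ∀ (l : F) (α β : Ω) (x y b : A),
      nijProd mul N l α β (x + y) b = nijProd mul N l α β x b + nijProd mul N l α β y b := by
    intro l α β x y b; simp only [nijProd, haddl, hNadd]; abel
  have hnsl : ∀ (l c : F) (α β : Ω) (x b : A),
      nijProd mul N l α β (c • x) b = c • nijProd mul N l α β x b := by
    intro l c α β x b; simp only [nijProd, hsmull, hNsmul, smul_add, smul_sub]
  have hnar : ∀ (l : F) (α β : Ω) (a y y' : A),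
      nijProd mul N l α β a (y + y') = nijProd mul N l α β a y + nijProd mul N l α β a y' := by
    intro l α β a y y'; simp only [nijProd, haddr, hNadd]; abel
  have hnsr : ∀ (l c : F) (α β : Ω) (a y : A),
      nijProd mul N l α β a (c • y) = c • nijProd mul N l α β a y := by
    intro l c α β a y; simp only [nijProd, hsmulr, hNsmul, smul_add, smul_sub]
  calc mul (l + m) (α * β) γ (mul l α β a b + t • nijProd mul N l α β a b) c
        + t • nijProd mul N (l + m) (α * β) γ
            (mul l α β a b + t • nijProd mul N l α β a b) c
      = mul (l + m) (α * β) γ (mul l α β a b) c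
        + t • (mul (l + m) (α * β) γ (nijProd mul N l α β a b) c
            + nijProd mul N (l + m) (α * β) γ (mul l α β a b) c)
        + (t * t) • nijProd mul N (l + m) (α * β) γ (nijProd mul N l α β a b) c := by
        simp only [haddl, hsmull, hnal, hnsl, smul_add, mul_smul]; abel
    _ = mul l α (β * γ) a (mul m β γ b c)
        + t • (mul l α (β * γ) a (nijProd mul N m β γ b c)
            + nijProd mul N l α (β * γ) a (mul m β γ b c))
        + (t * t) • nijProd mul N l α (β * γ) a (nijProd mul N m β γ b c) := by
        rw [h0, h1, hNassoc]
    _ = mul l α (β * γ) a (mul m β γ b c + t • nijProd mul N m β γ b c)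
        + t • nijProd mul N l α (β * γ) a
            (mul m β γ b c + t • nijProd mul N m β γ b c) := by
        simp only [haddr, hsmulr, hnar, hnsr, smul_add, mul_smul]; abel
end

section
/- Let A be an Ω-associative conformal algebra over a field 𝔽 and (N_ω)_{ω∈Ω} any family of linear maps N_ω : A → A with N_ω ∘ ∂ = ∂ ∘ N_ω; define a ∘^N_{λ;α,β} b := N_α(a) ·_{λ;α,β} b + a ·_{λ;α,β} N_β(b) − N_{αβ}(a ·_{λ;α,β} b) and ψ^N_{λ;α,β}(a, b) := N_α(a) ·_{λ;α,β} N_β(b) − N_{αβ}(a ∘^N_{λ;α,β} b). Then for all a, b, c ∈ A, λ, μ ∈ 𝔽, α, β, γ ∈ Ω: a ·_{λ;α,βγ} ψ^N_{μ;β,γ}(b, c) − ψ^N_{λ+μ;αβ,γ}(a ·_{λ;α,β} b, c) + ψ^N_{λ;α,βγ}(a, b ·_{μ;β,γ} c) − ψ^N_{λ;α,β}(a, b) ·_{λ+μ;αβ,γ} c = (a ∘^N_{λ;α,β} b) ∘^N_{λ+μ;αβ,γ} c − a ∘^N_{λ;α,βγ} (b ∘^N_{μ;β,γ} c). In particular,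 the products ∘^N are Ω-associative if and only if δ²(ψ^N) = 0, where δ² is the Hochschild differential of A with coefficients in the regular bimodule A, given by (δ²ψ)_{λ,μ;α,β,γ}(a,b,c) = a ·_{λ;α,βγ} ψ_{μ;β,γ}(b,c) − ψ_{λ+μ;αβ,γ}(a ·_{λ;α,β} b, c) + ψ_{λ;α,βγ}(a, b ·_{μ;β,γ} c) − ψ_{λ;α,β}(a,b) ·_{λ+μ;αβ,γ} c. -/
/-- The `2`-cochain `ψ^N(a,b) = N_α(a)·N_β(b) − N_{αβ}(a ∘^N b)`. -/
def nijPsi {F : Type*} [Field F] {Ω : Type*} [Semigroup Ω]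
    {A : Type*} [AddCommGroup A] [Module F A]
    (mul : F → Ω → Ω → A → A → A) (N : Ω → A → A)
    (l : F) (α β : Ω) (a b : A) : A :=
  mul l α β (N α a) (N β b) - N (α * β) (nijProd mul N l α β a b)


private lemma addf_sub {A : Type*} [AddCommGroup A] (f : A → A)
    (h : ∀ x y, f (x + y) = f x + f y) (x y : A) : f (x - y) = f x - f y := by
  have := h y (x - y)
  rw [add_sub_cancel] at this
  exact (eq_sub_of_add_eq' this.symm)

/-- For any family `(N_ω)` of linear maps commuting with `∂`:
`δ²(ψ^N)(a,b,c) = (a ∘^N b) ∘^N c − a ∘^N (b ∘^N c)`; in particular `∘^N` is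
`Ω`-associative if and only if `ψ^N` is a `2`-cocycle of the Hochschild complex of `A`
with coefficients in the regular bimodule. -/
theorem stmt_12 {F : Type*} [Field F] {Ω : Type*} [Semigroup Ω]
    {A : Type*} [AddCommGroup A] [Module F A]
    (D : A → A) (mul : F → Ω → Ω → A → A → A)
    (hA : OmegaConfFun D mul)
    (N : Ω → A → A)
    (hNadd : ∀ (ω : Ω) (a a' : A), N ω (a + a') = N ω a + N ω a')
    (hNsmul : ∀ (ω : Ω) (c : F) (a : A), N ω (c • a) = c • N ω a)
    (hND : ∀ (ω : Ω) (a : A), N ω (D a) = D (N ω a)) :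
    (∀ (l m : F) (α β γ : Ω) (a b c : A),
        mul l α (β * γ) a (nijPsi mul N m β γ b c)
            - nijPsi mul N (l + m) (α * β) γ (mul l α β a b) c
            + nijPsi mul N l α (β * γ) a (mul m β γ b c)
            - mul (l + m) (α * β) γ (nijPsi mul N l α β a b) c
          = nijProd mul N (l + m) (α * β) γ (nijProd mul N l α β a b) c
            - nijProd mul N l α (β * γ) a (nijProd mul N m β γ b c))
      ∧ ((∀ (l m : F) (α β γ : Ω) (a b c : A),
            nijProd mul N (l + m) (α * β) γ (nijProd mul N l α β a b) c
              = nijProd mul N l α (β * γ) a (nijProd mul N m β γ b c))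
          ↔ (∀ (l m : F) (α β γ : Ω) (a b c : A),
              mul l α (β * γ) a (nijPsi mul N m β γ b c)
                  - nijPsi mul N (l + m) (α * β) γ (mul l α β a b) c
                  + nijPsi mul N l α (β * γ) a (mul m β γ b c)
                  - mul (l + m) (α * β) γ (nijPsi mul N l α β a b) c
                = 0)) := by
  obtain ⟨hDa, hDs, hml, hmls, hmr, hmrs, hDl, hDr, hassoc⟩ := hA
  have hmlsub : ∀ (l : F) (α β : Ω) (a a' b : A),
      mul l α β (a - a') b = mul l α β a b - mul l α β a' b := by
    intro l α β a a' b
    exact addf_sub (fun x => mul l α β x b) (fun x y => hml l α β x y b) a a'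
  have hmrsub : ∀ (l : F) (α β : Ω) (a b b' : A),
      mul l α β a (b - b') = mul l α β a b - mul l α β a b' := by
    intro l α β a b b'
    exact addf_sub (fun x => mul l α β a x) (fun x y => hmr l α β a x y) b b'
  have hNsub : ∀ (ω : Ω) (a a' : A), N ω (a - a') = N ω a - N ω a' :=
    fun ω => addf_sub (N ω) (hNadd ω)
  have key : ∀ (l m : F) (α β γ : Ω) (a b c : A),
      mul l α (β * γ) a (nijPsi mul N m β γ b c)
          - nijPsi mul N (l + m) (α * β) γ (mul l α β a b) c
          + nijPsi mul N l α (β * γ) a (mul m β γ b c)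
          - mul (l + m) (α * β) γ (nijPsi mul N l α β a b) c
        = nijProd mul N (l + m) (α * β) γ (nijProd mul N l α β a b) c
          - nijProd mul N l α (β * γ) a (nijProd mul N m β γ b c) := by
    intro l m α β γ a b c
    simp only [nijPsi, nijProd, hml, hmls, hmr, hmrs, hmlsub, hmrsub, hNadd, hNsub,
      hassoc, mul_assoc]
    abel
  refine ⟨key, ?_, ?_⟩
  · intro h l m α β γ a b c
    rw [key, h, sub_self]
  · intro h l m α β γ a b c
    have := key l m α β γ a b c
    rw [h] at this
    exact (sub_eq_zero.mp this.symm)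
end

section
/- Let 0 → M → Â → A → 0 be an abelian extension of a Rota-Baxter family Ω-associative conformal algebra (A, ·, (P_ω)) of weight q by (M, (P_{M,ω})), with structure maps (i_ω), (p_ω), and let (s_ω) be a section. For a ∈ A, m ∈ M, λ ∈ 𝔽, α, β ∈ Ω, the elements s_α(a) ·̂_{λ;α,β} i_β(m) and i_α(m) ·̂_{λ;α,β} s_β(a) lie in ker(p_{αβ}) = range(i_{αβ}), so one may define a ·_{λ;α,β} m := i_{αβ}^{-1}( s_α(a) ·̂_{λ;α,β} i_β(m) ) and m ·_{λ;α,β} a := i_{αβ}^{-1}( i_α(m) ·̂_{λ;α,β} s_β(a) ). Then M, equipped with these actions, its map ∂, and the family (P_{M,ω}), is a Rota-Baxter family bimodule over (A, ·, (P_ω)). -/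
/-- The axioms of a bimodule `M` over an `Ω`-associative conformal algebra `A`, with
left action `al` and right action `ar`. -/
def OmegaBimodFun {F : Type*} [Field F] {Ω : Type*} [Semigroup Ω]
    {A M : Type*} [AddCommGroup A] [Module F A] [AddCommGroup M] [Module F M]
    (D : A → A) (DM : M → M) (mul : F → Ω → Ω → A → A → A)
    (al : F → Ω → Ω → A → M → M) (ar : F → Ω → Ω → M → A → M) : Prop :=
  (∀ u u' : M, DM (u + u') = DM u + DM u') ∧
  (∀ (c : F) (u : M), DM (c • u) = c • DM u) ∧
  (∀ (l : F) (α β : Ω) (a a' : A) (u : M),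
    al l α β (a + a') u = al l α β a u + al l α β a' u) ∧
  (∀ (l c : F) (α β : Ω) (a : A) (u : M), al l α β (c • a) u = c • al l α β a u) ∧
  (∀ (l : F) (α β : Ω) (a : A) (u u' : M),
    al l α β a (u + u') = al l α β a u + al l α β a u') ∧
  (∀ (l c : F) (α β : Ω) (a : A) (u : M), al l α β a (c • u) = c • al l α β a u) ∧
  (∀ (l : F) (α β : Ω) (u : M) (a a' : A),
    ar l α β u (a + a') = ar l α β u a + ar l α β u a') ∧
  (∀ (l c : F) (α β : Ω) (u : M) (a : A), ar l α β u (c • a) = c • ar l α β u a) ∧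
  (∀ (l : F) (α β : Ω) (u u' : M) (a : A),
    ar l α β (u + u') a = ar l α β u a + ar l α β u' a) ∧
  (∀ (l c : F) (α β : Ω) (u : M) (a : A), ar l α β (c • u) a = c • ar l α β u a) ∧
  (∀ (l : F) (α β : Ω) (a : A) (u : M), al l α β (D a) u = -l • al l α β a u) ∧
  (∀ (l : F) (α β : Ω) (a : A) (u : M),
    al l α β a (DM u) = DM (al l α β a u) + l • al l α β a u) ∧
  (∀ (l : F) (α β : Ω) (u : M) (a : A), ar l α β (DM u) a = -l • ar l α β u a) ∧
  (∀ (l : F) (α β : Ω) (u : M) (a : A),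
    ar l α β u (D a) = DM (ar l α β u a) + l • ar l α β u a) ∧
  (∀ (l m : F) (α β γ : Ω) (a b : A) (u : M),
    al (l + m) (α * β) γ (mul l α β a b) u = al l α (β * γ) a (al m β γ b u)) ∧
  (∀ (l m : F) (α β γ : Ω) (a : A) (u : M) (b : A),
    ar (l + m) (α * β) γ (al l α β a u) b = al l α (β * γ) a (ar m β γ u b)) ∧
  (∀ (l m : F) (α β γ : Ω) (u : M) (a b : A),
    ar (l + m) (α * β) γ (ar l α β u a) b = ar l α (β * γ) u (mul m β γ a b))

/-- The Rota-Baxter family bimodule conditions for `(M, (P_{M,ω}))` over a Rota-Baxter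
family `Ω`-associative conformal algebra with operators `(P_ω)`:  linearity of the
`P_{M,ω}`, commutation with `∂`, and the two Rota-Baxter family action identities. -/
def IsRBFBimod {F : Type*} [Field F] {Ω : Type*} [Semigroup Ω]
    {A M : Type*} [AddCommGroup A] [Module F A] [AddCommGroup M] [Module F M]
    (DM : M → M)
    (al : F → Ω → Ω → A → M → M) (ar : F → Ω → Ω → M → A → M)
    (q : F) (P : Ω → A → A) (PM : Ω → M → M) : Prop :=
  (∀ (ω : Ω) (u u' : M), PM ω (u + u') = PM ω u + PM ω u') ∧
  (∀ (ω : Ω) (c : F) (u : M), PM ω (c • u) = c • PM ω u) ∧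
  (∀ (ω : Ω) (u : M), PM ω (DM u) = DM (PM ω u)) ∧
  (∀ (l : F) (α β : Ω) (a : A) (u : M),
    al l α β (P α a) (PM β u)
      = PM (α * β) (al l α β a (PM β u) + al l α β (P α a) u + q • al l α β a u)) ∧
  (∀ (l : F) (α β : Ω) (u : M) (a : A),
    ar l α β (PM α u) (P β a)
      = PM (α * β) (ar l α β u (P β a) + ar l α β (PM α u) a + q • ar l α β u a))

/-- Given an abelian extension `0 → M → Â → A → 0` of a Rota-Baxter family
`Ω`-associative conformal algebra `(A, ·, (P_ω))` of weight `q` by `(M, (P_{M,ω}))`,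
and a section `(s_ω)`, the actions `a · m := i⁻¹( s_α(a) ·̂ i_β(m) )` and
`m · a := i⁻¹( i_α(m) ·̂ s_β(a) )` make `(M, (P_{M,ω}))` a Rota-Baxter family
bimodule over `(A, ·, (P_ω))`. -/
theorem stmt_14 {F : Type*} [Field F] {Ω : Type*} [Semigroup Ω]
    {A Ahat M : Type*} [AddCommGroup A] [Module F A]
    [AddCommGroup Ahat] [Module F Ahat] [AddCommGroup M] [Module F M] (q : F)
    -- the base Rota-Baxter family Ω-associative conformal algebra
    (D : A → A) (mul : F → Ω → Ω → A → A → A)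
    (hA : OmegaConfFun D mul)
    (P : Ω → A → A) (hP : IsRBFamilyOp D mul q P)
    -- the middle Rota-Baxter family Ω-associative conformal algebra
    (DH : Ahat → Ahat) (hmul : F → Ω → Ω → Ahat → Ahat → Ahat)
    (hAhat : OmegaConfFun DH hmul)
    (PH : Ω → Ahat → Ahat) (hPH : IsRBFamilyOp DH hmul q PH)
    -- the kernel data
    (DM : M →ₗ[F] M) (PM : Ω → M →ₗ[F] M)
    (hPMD : ∀ (ω : Ω) (u : M), PM ω (DM u) = DM (PM ω u))
    -- the structure maps of the extension
    (i : Ω → M →ₗ[F] Ahat) (p : Ω → Ahat →ₗ[F] A)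
    (hiD : ∀ (ω : Ω) (u : M), i ω (DM u) = DH (i ω u))
    (hpD : ∀ (ω : Ω) (x : Ahat), p ω (DH x) = D (p ω x))
    (hiinj : ∀ ω : Ω, Function.Injective (i ω))
    (hpsurj : ∀ ω : Ω, Function.Surjective (p ω))
    (hker : ∀ (ω : Ω) (x : Ahat), p ω x = 0 ↔ x ∈ Set.range (i ω))
    (hzero : ∀ (l : F) (α β : Ω) (u v : M), hmul l α β (i α u) (i β v) = 0)
    (hpmul : ∀ (l : F) (α β : Ω) (x y : Ahat),
      p (α * β) (hmul l α β x y) = mul l α β (p α x) (p β y))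
    (hiP : ∀ (ω : Ω) (u : M), i ω (PM ω u) = PH ω (i ω u))
    (hpP : ∀ (ω : Ω) (x : Ahat), p ω (PH ω x) = P ω (p ω x))
    -- a section
    (s : Ω → A →ₗ[F] Ahat)
    (hs : ∀ (ω : Ω) (a : A), p ω (s ω a) = a)
    (hsD : ∀ (ω : Ω) (a : A), s ω (D a) = DH (s ω a)) :
    (∀ (l : F) (α β : Ω) (a : A) (u : M),
        p (α * β) (hmul l α β (s α a) (i β u)) = 0)
      ∧ (∀ (l : F) (α β : Ω) (u : M) (a : A),
          p (α * β) (hmul l α β (i α u) (s β a)) = 0)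
      ∧ OmegaBimodFun D (⇑DM) mul
          (fun l α β a u => Function.invFun (⇑(i (α * β))) (hmul l α β (s α a) (i β u)))
          (fun l α β u a => Function.invFun (⇑(i (α * β))) (hmul l α β (i α u) (s β a)))
      ∧ IsRBFBimod (⇑DM)
          (fun l α β a u => Function.invFun (⇑(i (α * β))) (hmul l α β (s α a) (i β u)))
          (fun l α β u a => Function.invFun (⇑(i (α * β))) (hmul l α β (i α u) (s β a)))
          q P (fun ω => ⇑(PM ω)) := by
  obtain ⟨-, -, hAml, hAmsl, hAmr, hAmsr, -, -, -⟩ := hA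
  obtain ⟨-, -, hml, hmsl, hmr, hmsr, hDl, hDr, hassoc⟩ := hAhat
  obtain ⟨hPHadd, hPHsmul, hPHD, hPHrb⟩ := hPH
  have mul_zero_r : ∀ (l : F) (α β : Ω) (a : A), mul l α β a 0 = 0 := by
    intro l α β a
    have := hAmsr l 0 α β a 0
    simpa using this
  have mul_zero_l : ∀ (l : F) (α β : Ω) (a : A), mul l α β 0 a = 0 := by
    intro l α β a
    have := hAmsl l 0 α β 0 a
    simpa using this
  have hpi : ∀ (ω : Ω) (u : M), p ω (i ω u) = 0 := fun ω u =>
    (hker ω (i ω u)).mpr ⟨u, rfl⟩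
  have hinv : ∀ (ω ω' : Ω) (x : Ahat), ω = ω' → p ω x = 0 →
      i ω' (Function.invFun (⇑(i ω)) x) = x := by
    rintro ω ω' x rfl h
    exact Function.invFun_eq ((hker ω x).mp h)
  have pal : ∀ (l : F) (α β : Ω) (a : A) (u : M),
      p (α * β) (hmul l α β (s α a) (i β u)) = 0 := by
    intro l α β a u
    rw [hpmul, hs, hpi]
    exact mul_zero_r _ _ _ _
  have par : ∀ (l : F) (α β : Ω) (u : M) (a : A),
      p (α * β) (hmul l α β (i α u) (s β a)) = 0 := by
    intro l α β u a
    rw [hpmul, hpi, hs]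
    exact mul_zero_l _ _ _ _
  have ial : ∀ (l : F) (α β : Ω) (a : A) (u : M),
      i (α * β) (Function.invFun (⇑(i (α * β))) (hmul l α β (s α a) (i β u)))
        = hmul l α β (s α a) (i β u) := fun l α β a u =>
    hinv _ _ _ rfl (pal l α β a u)
  have iar : ∀ (l : F) (α β : Ω) (u : M) (a : A),
      i (α * β) (Function.invFun (⇑(i (α * β))) (hmul l α β (i α u) (s β a)))
        = hmul l α β (i α u) (s β a) := fun l α β u a =>
    hinv _ _ _ rfl (par l α β u a)
  have hneg_l : ∀ (l : F) (α β : Ω) (x y : Ahat),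
      hmul l α β (-x) y = -hmul l α β x y := by
    intro l α β x y
    have := hmsl l (-1) α β x y
    simpa using this
  have hneg_r : ∀ (l : F) (α β : Ω) (x y : Ahat),
      hmul l α β x (-y) = -hmul l α β x y := by
    intro l α β x y
    have := hmsr l (-1) α β x y
    simpa using this
  have hsub_l : ∀ (l : F) (α β : Ω) (x y z : Ahat),
      hmul l α β (x - y) z = hmul l α β x z - hmul l α β y z := by
    intro l α β x y z
    rw [sub_eq_add_neg, hml, hneg_l, ← sub_eq_add_neg]
  have hsub_r : ∀ (l : F) (α β : Ω) (x y z : Ahat),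
      hmul l α β x (y - z) = hmul l α β x y - hmul l α β x z := by
    intro l α β x y z
    rw [sub_eq_add_neg, hmr, hneg_r, ← sub_eq_add_neg]
  have hcorr : ∀ (l : F) (α β : Ω) (a b : A), ∃ w : M,
      s (α * β) (mul l α β a b) = hmul l α β (s α a) (s β b) - i (α * β) w := by
    intro l α β a b
    have h : p (α * β) (hmul l α β (s α a) (s β b) - s (α * β) (mul l α β a b)) = 0 := by
      rw [map_sub, hpmul, hs, hs, hs, sub_self]
    obtain ⟨w, hw⟩ := (hker _ _).mp h
    exact ⟨w, by rw [hw]; abel⟩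
  have hPcorr : ∀ (α : Ω) (a : A), ∃ w : M,
      s α (P α a) = PH α (s α a) + i α w := by
    intro α a
    have h : p α (s α (P α a) - PH α (s α a)) = 0 := by
      rw [map_sub, hs, hpP, hs, sub_self]
    obtain ⟨w, hw⟩ := (hker _ _).mp h
    exact ⟨w, by rw [hw]; abel⟩
  refine ⟨pal, par,
    ⟨?_, ?_, ?_, ?_, ?_, ?_, ?_, ?_, ?_, ?_, ?_, ?_, ?_, ?_, ?_, ?_, ?_⟩,
    ⟨?_, ?_, ?_, ?_, ?_⟩⟩
  · intro u u'; exact map_add DM u u'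
  · intro c u; exact map_smul DM c u
  · -- al additive in a
    intro l α β a a' u
    apply hiinj (α * β)
    rw [ial, map_add (i (α * β)), ial, ial, map_add (s α), hml]
  · -- al smul in a
    intro l c α β a u
    apply hiinj (α * β)
    rw [ial, map_smul (i (α * β)), ial, map_smul (s α), hmsl]
  · -- al additive in u
    intro l α β a u u'
    apply hiinj (α * β)
    rw [ial, map_add (i (α * β)), ial, ial, map_add (i β), hmr]
  · -- al smul in u
    intro l c α β a u
    apply hiinj (α * β)
    rw [ial, map_smul (i (α * β)), ial, map_smul (i β), hmsr]
  · -- ar additive in a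
    intro l α β u a a'
    apply hiinj (α * β)
    rw [iar, map_add (i (α * β)), iar, iar, map_add (s β), hmr]
  · -- ar smul in a
    intro l c α β u a
    apply hiinj (α * β)
    rw [iar, map_smul (i (α * β)), iar, map_smul (s β), hmsr]
  · -- ar additive in u
    intro l α β u u' a
    apply hiinj (α * β)
    rw [iar, map_add (i (α * β)), iar, iar, map_add (i α), hml]
  · -- ar smul in u
    intro l c α β u a
    apply hiinj (α * β)
    rw [iar, map_smul (i (α * β)), iar, map_smul (i α), hmsl]
  · -- al (D a) u
    intro l α β a u
    apply hiinj (α * β)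
    rw [ial, map_smul (i (α * β)), ial, hsD, hDl]
  · -- al a (DM u)
    intro l α β a u
    apply hiinj (α * β)
    rw [ial, map_add (i (α * β)), map_smul (i (α * β)), hiD (α * β), ial, hiD β, hDr]
  · -- ar (DM u) a
    intro l α β u a
    apply hiinj (α * β)
    rw [iar, map_smul (i (α * β)), iar, hiD α, hDl]
  · -- ar u (D a)
    intro l α β u a
    apply hiinj (α * β)
    rw [iar, map_add (i (α * β)), map_smul (i (α * β)), hiD (α * β), iar, hsD, hDr]
  · -- al assoc
    intro l m α β γ a b u
    obtain ⟨w, hw⟩ := hcorr l α β a b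
    have pL : p (α * β * γ)
        (hmul (l + m) (α * β) γ (s (α * β) (mul l α β a b)) (i γ u)) = 0 := by
      rw [hpmul, hs, hpi]
      exact mul_zero_r _ _ _ _
    apply hiinj (α * (β * γ))
    rw [hinv _ _ _ (mul_assoc α β γ) pL, ial l α (β * γ) a, ial m β γ b u,
      hw, hsub_l, hzero, sub_zero, hassoc]
  · -- mixed assoc
    intro l m α β γ a u b
    have pL : p (α * β * γ)
        (hmul (l + m) (α * β) γ
          (i (α * β) (Function.invFun (⇑(i (α * β))) (hmul l α β (s α a) (i β u))))
          (s γ b)) = 0 := by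
      rw [hpmul, hpi, hs]
      exact mul_zero_l _ _ _ _
    apply hiinj (α * (β * γ))
    rw [hinv _ _ _ (mul_assoc α β γ) pL, ial l α β a u, hassoc,
      ial l α (β * γ) a, iar m β γ u b]
  · -- ar assoc
    intro l m α β γ u a b
    obtain ⟨w, hw⟩ := hcorr m β γ a b
    have pL : p (α * β * γ)
        (hmul (l + m) (α * β) γ
          (i (α * β) (Function.invFun (⇑(i (α * β))) (hmul l α β (i α u) (s β a))))
          (s γ b)) = 0 := by
      rw [hpmul, hpi, hs]
      exact mul_zero_l _ _ _ _
    apply hiinj (α * (β * γ))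
    rw [hinv _ _ _ (mul_assoc α β γ) pL, iar l α β u a, hassoc,
      iar l α (β * γ) u, hw, hsub_r, hzero, sub_zero]
  · intro ω u u'; exact map_add (PM ω) u u'
  · intro ω c u; exact map_smul (PM ω) c u
  · intro ω u; exact hPMD ω u
  · -- RB left identity
    intro l α β a u
    obtain ⟨w, hw⟩ := hPcorr α a
    have hw' : PH α (s α a) = s α (P α a) - i α w := by rw [hw]; abel
    apply hiinj (α * β)
    conv_lhs => rw [ial l α β (P α a) (PM β u), hiP β u, hw,
      hml, hPHrb, hw', hsub_l, hzero, sub_zero, ← hiP β u,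
      hzero l α β w (PM β u), add_zero]
    conv_rhs => rw [hiP (α * β), map_add (i (α * β)), map_add (i (α * β)),
      map_smul (i (α * β)), ial l α β a (PM β u), ial l α β (P α a) u, ial l α β a u]
    congr 1
    abel
  · -- RB right identity
    intro l α β u a
    obtain ⟨w, hw⟩ := hPcorr β a
    have hw' : PH β (s β a) = s β (P β a) - i β w := by rw [hw]; abel
    apply hiinj (α * β)
    conv_lhs => rw [iar l α β (PM α u) (P β a), hiP α u, hw,
      hmr, hPHrb, hw', hsub_r, hzero, sub_zero, ← hiP α u,
      hzero l α β (PM α u) w, add_zero]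
    conv_rhs => rw [hiP (α * β), map_add (i (α * β)), map_add (i (α * β)),
      map_smul (i (α * β)), iar l α β u (P β a), iar l α β (PM α u) a, iar l α β u a]
    congr 1
    abel
end

section
/- Let 0 → M → Â → A → 0 be an abelian extension of a Rota-Baxter family Ω-associative conformal algebra (A, ·, (P_ω)) of weight q by (M, (P_{M,ω})), with structure maps (i_ω), (p_ω), and let (s_ω) be a section. Equip M with the induced Rota-Baxter family bimodule structure a ·_{λ;α,β} m := i_{αβ}^{-1}( s_α(a) ·̂_{λ;α,β} i_β(m) ), m ·_{λ;α,β} a := i_{αβ}^{-1}( i_α(m) ·̂_{λ;α,β} s_β(a) ). Define ψ_{λ;α,β}(a, b) := i_{αβ}^{-1}( s_α(a) ·̂_{λ;α,β} s_β(b) − s_{αβ}(a ·_{λ;α,β} b) ) and χ_ω(a) := i_ω^{-1}( P̂_ω(s_ω(a)) − s_ω(P_ω(a)) ) (both well defined, the indicated elements lying in the appropriate kernels of p). Then ψ is a 2-cochain, χ is a 1-cochain, and (ψ, χ) is a 2-cocycle: δ²ψ = 0 and ∂¹χ + Φ²ψ = 0. -/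
/-- The Hochschild differential `δ²` applied to a `2`-cochain `ψ` with values in a
bimodule, evaluated at `(λ,μ;α,β,γ)` and `(a,b,c)`. -/
def delta2 {F : Type*} [Field F] {Ω : Type*} [Semigroup Ω]
    {A M : Type*} [AddCommGroup A] [Module F A] [AddCommGroup M] [Module F M]
    (mul : F → Ω → Ω → A → A → A)
    (al : F → Ω → Ω → A → M → M) (ar : F → Ω → Ω → M → A → M)
    (ψ : F → Ω → Ω → A → A → M)
    (l m : F) (α β γ : Ω) (a b c : A) : M :=
  al l α (β * γ) a (ψ m β γ b c) - ψ (l + m) (α * β) γ (mul l α β a b) c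
    + ψ l α (β * γ) a (mul m β γ b c) - ar (l + m) (α * β) γ (ψ l α β a b) c

/-- The map `Φ²` applied to a `2`-cochain `ψ`. -/
def phi2 {F : Type*} [Field F] {Ω : Type*} [Semigroup Ω]
    {A M : Type*} [AddCommGroup A] [Module F A] [AddCommGroup M] [Module F M]
    (q : F) (P : Ω → A → A) (PM : Ω → M → M)
    (ψ : F → Ω → Ω → A → A → M)
    (l : F) (α β : Ω) (a b : A) : M :=
  ψ l α β (P α a) (P β b)
    - PM (α * β)
        (ψ l α β (P α a) b + ψ l α β a (P β b) + q • ψ l α β a b)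

/-- The differential `∂¹` of the cochain complex of the Rota-Baxter family operator,
applied to a `1`-cochain `χ`. -/
def dRB1 {F : Type*} [Field F] {Ω : Type*} [Semigroup Ω]
    {A M : Type*} [AddCommGroup A] [Module F A] [AddCommGroup M] [Module F M]
    (mul : F → Ω → Ω → A → A → A)
    (al : F → Ω → Ω → A → M → M) (ar : F → Ω → Ω → M → A → M)
    (q : F) (P : Ω → A → A) (PM : Ω → M → M)
    (χ : Ω → A → M)
    (l : F) (α β : Ω) (a b : A) : M :=
  al l α β (P α a) (χ β b) - PM (α * β) (al l α β a (χ β b))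
    - χ (α * β)
        (mul l α β (P α a) b + mul l α β a (P β b) + q • mul l α β a b)
    + ar l α β (χ α a) (P β b) - PM (α * β) (ar l α β (χ α a) b)

/-- Given an abelian extension `0 → M → Â → A → 0` of a Rota-Baxter family
`Ω`-associative conformal algebra `(A, ·, (P_ω))` of weight `q` by `(M, (P_{M,ω}))`
and a section `(s_ω)`, the maps `ψ(a,b) = i⁻¹(s_α(a)·̂s_β(b) − s_{αβ}(a·b))` and
`χ_ω(a) = i⁻¹(P̂_ω(s_ω(a)) − s_ω(P_ω(a)))` form a `2`-cochain and a `1`-cochain, and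
`(ψ, χ)` is a `2`-cocycle: `δ²ψ = 0` and `∂¹χ + Φ²ψ = 0`. -/
theorem stmt_15 {F : Type*} [Field F] {Ω : Type*} [Semigroup Ω]
    {A Ahat M : Type*} [AddCommGroup A] [Module F A]
    [AddCommGroup Ahat] [Module F Ahat] [AddCommGroup M] [Module F M] (q : F)
    (D : A → A) (mul : F → Ω → Ω → A → A → A)
    (hA : OmegaConfFun D mul)
    (P : Ω → A → A) (hP : IsRBFamilyOp D mul q P)
    (DH : Ahat → Ahat) (hmul : F → Ω → Ω → Ahat → Ahat → Ahat)
    (hAhat : OmegaConfFun DH hmul)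
    (PH : Ω → Ahat → Ahat) (hPH : IsRBFamilyOp DH hmul q PH)
    (DM : M →ₗ[F] M) (PM : Ω → M →ₗ[F] M)
    (hPMD : ∀ (ω : Ω) (u : M), PM ω (DM u) = DM (PM ω u))
    (i : Ω → M →ₗ[F] Ahat) (p : Ω → Ahat →ₗ[F] A)
    (hiD : ∀ (ω : Ω) (u : M), i ω (DM u) = DH (i ω u))
    (hpD : ∀ (ω : Ω) (x : Ahat), p ω (DH x) = D (p ω x))
    (hiinj : ∀ ω : Ω, Function.Injective (i ω))
    (hpsurj : ∀ ω : Ω, Function.Surjective (p ω))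
    (hker : ∀ (ω : Ω) (x : Ahat), p ω x = 0 ↔ x ∈ Set.range (i ω))
    (hzero : ∀ (l : F) (α β : Ω) (u v : M), hmul l α β (i α u) (i β v) = 0)
    (hpmul : ∀ (l : F) (α β : Ω) (x y : Ahat),
      p (α * β) (hmul l α β x y) = mul l α β (p α x) (p β y))
    (hiP : ∀ (ω : Ω) (u : M), i ω (PM ω u) = PH ω (i ω u))
    (hpP : ∀ (ω : Ω) (x : Ahat), p ω (PH ω x) = P ω (p ω x))
    (s : Ω → A →ₗ[F] Ahat)
    (hs : ∀ (ω : Ω) (a : A), p ω (s ω a) = a)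
    (hsD : ∀ (ω : Ω) (a : A), s ω (D a) = DH (s ω a)) :
    -- the induced bimodule actions on `M`
    (fun actL : F → Ω → Ω → A → M → M => fun actR : F → Ω → Ω → M → A → M =>
     fun ψ : F → Ω → Ω → A → A → M => fun χ : Ω → A → M =>
      -- `ψ` is a 2-cochain
      ((∀ (l : F) (α β : Ω) (a a' b : A),
          ψ l α β (a + a') b = ψ l α β a b + ψ l α β a' b)
        ∧ (∀ (l c : F) (α β : Ω) (a b : A), ψ l α β (c • a) b = c • ψ l α β a b)
        ∧ (∀ (l : F) (α β : Ω) (a b b' : A),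
            ψ l α β a (b + b') = ψ l α β a b + ψ l α β a b')
        ∧ (∀ (l c : F) (α β : Ω) (a b : A), ψ l α β a (c • b) = c • ψ l α β a b)
        ∧ (∀ (l : F) (α β : Ω) (a b : A), ψ l α β (D a) b = -l • ψ l α β a b)
        ∧ (∀ (l : F) (α β : Ω) (a b : A),
            ψ l α β a (D b) = DM (ψ l α β a b) + l • ψ l α β a b))
      -- `χ` is a 1-cochain
      ∧ ((∀ (ω : Ω) (a a' : A), χ ω (a + a') = χ ω a + χ ω a')
        ∧ (∀ (ω : Ω) (c : F) (a : A), χ ω (c • a) = c • χ ω a)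
        ∧ (∀ (ω : Ω) (a : A), χ ω (D a) = DM (χ ω a)))
      -- `(ψ, χ)` is a 2-cocycle
      ∧ (∀ (l m : F) (α β γ : Ω) (a b c : A),
          delta2 mul actL actR ψ l m α β γ a b c = 0)
      ∧ (∀ (l : F) (α β : Ω) (a b : A),
          dRB1 mul actL actR q P (fun ω => ⇑(PM ω)) χ l α β a b
              + phi2 q P (fun ω => ⇑(PM ω)) ψ l α β a b = 0))
    (fun l α β a u => Function.invFun (⇑(i (α * β))) (hmul l α β (s α a) (i β u)))
    (fun l α β u a => Function.invFun (⇑(i (α * β))) (hmul l α β (i α u) (s β a)))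
    (fun l α β a b =>
      Function.invFun (⇑(i (α * β)))
        (hmul l α β (s α a) (s β b) - s (α * β) (mul l α β a b)))
    (fun ω a => Function.invFun (⇑(i ω)) (PH ω (s ω a) - s ω (P ω a))) := by

  obtain ⟨hDa, hDs, hal, hsl, har, hsr, hdl, hdr, hassoc⟩ := hA
  obtain ⟨hHDa, hHDs, hHal, hHsl, hHar, hHsr, hHdl, hHdr, hHassoc⟩ := hAhat
  obtain ⟨hPa, hPs, hPD, hPrb⟩ := hP
  obtain ⟨hPHa, hPHs, hPHD, hPHrb⟩ := hPH
  -- zero lemmas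
  have mul0r : ∀ (l : F) (α β : Ω) (a : A), mul l α β a 0 = 0 := by
    intro l α β a; simpa using hsr l 0 α β a 0
  have mul0l : ∀ (l : F) (α β : Ω) (b : A), mul l α β 0 b = 0 := by
    intro l α β b; simpa using hsl l 0 α β 0 b
  -- subtraction lemmas
  have hHsubl : ∀ (l : F) (α β : Ω) (x y z : Ahat),
      hmul l α β (x - y) z = hmul l α β x z - hmul l α β y z := by
    intro l α β x y z
    rw [sub_eq_add_neg, hHal, ← neg_one_smul F y, hHsl, neg_one_smul,
      ← sub_eq_add_neg]
  have hHsubr : ∀ (l : F) (α β : Ω) (x y z : Ahat),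
      hmul l α β x (y - z) = hmul l α β x y - hmul l α β x z := by
    intro l α β x y z
    rw [sub_eq_add_neg, hHar, ← neg_one_smul F z, hHsr, neg_one_smul,
      ← sub_eq_add_neg]
  have hPHsub : ∀ (ω : Ω) (x y : Ahat), PH ω (x - y) = PH ω x - PH ω y := by
    intro ω x y
    rw [sub_eq_add_neg, hPHa, ← neg_one_smul F y, hPHs, neg_one_smul,
      ← sub_eq_add_neg]
  have hHDsub : ∀ (x y : Ahat), DH (x - y) = DH x - DH y := by
    intro x y
    rw [sub_eq_add_neg, hHDa, ← neg_one_smul F y, hHDs, neg_one_smul,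
      ← sub_eq_add_neg]
  -- invFun lemmas
  have hinv : ∀ (ω : Ω) (x : Ahat), p ω x = 0 →
      i ω (Function.invFun (⇑(i ω)) x) = x := by
    intro ω x hx
    exact Function.invFun_eq ((hker ω x).mp hx)
  have hpi : ∀ (ω : Ω) (u : M), p ω (i ω u) = 0 := by
    intro ω u; exact (hker ω (i ω u)).mpr ⟨u, rfl⟩
  -- kernel lemmas
  have hkψ : ∀ (l : F) (α β ω : Ω) (a b : A), α * β = ω →
      p ω (hmul l α β (s α a) (s β b) - s ω (mul l α β a b)) = 0 := by
    rintro l α β ω a b rfl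
    simp [map_sub, hpmul, hs]
  have hkL : ∀ (l : F) (α β ω : Ω) (a : A) (x : Ahat), α * β = ω →
      p β x = 0 → p ω (hmul l α β (s α a) x) = 0 := by
    rintro l α β ω a x rfl hx
    rw [hpmul, hs, hx, mul0r]
  have hkR : ∀ (l : F) (α β ω : Ω) (x : Ahat) (b : A), α * β = ω →
      p α x = 0 → p ω (hmul l α β x (s β b)) = 0 := by
    rintro l α β ω x b rfl hx
    rw [hpmul, hs, hx, mul0l]
  have hkχ : ∀ (ω : Ω) (a : A), p ω (PH ω (s ω a) - s ω (P ω a)) = 0 := by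
    intro ω a; simp [map_sub, hpP, hs]
  dsimp only
  refine ⟨⟨?_, ?_, ?_, ?_, ?_, ?_⟩, ⟨?_, ?_, ?_⟩, ?_, ?_⟩
  · -- ψ additive left
    intro l α β a a' b
    apply hiinj (α * β)
    rw [map_add (i (α * β)), hinv _ _ (hkψ l α β _ (a + a') b rfl),
      hinv _ _ (hkψ l α β _ a b rfl), hinv _ _ (hkψ l α β _ a' b rfl),
      map_add, hHal, hal, map_add]
    abel
  · -- ψ smul left
    intro l c α β a b
    apply hiinj (α * β)
    rw [map_smul (i (α * β)), hinv _ _ (hkψ l α β _ (c • a) b rfl),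
      hinv _ _ (hkψ l α β _ a b rfl), map_smul, hHsl, hsl, map_smul, smul_sub]
  · -- ψ additive right
    intro l α β a b b'
    apply hiinj (α * β)
    rw [map_add (i (α * β)), hinv _ _ (hkψ l α β _ a (b + b') rfl),
      hinv _ _ (hkψ l α β _ a b rfl), hinv _ _ (hkψ l α β _ a b' rfl),
      map_add, hHar, har, map_add]
    abel
  · -- ψ smul right
    intro l c α β a b
    apply hiinj (α * β)
    rw [map_smul (i (α * β)), hinv _ _ (hkψ l α β _ a (c • b) rfl),
      hinv _ _ (hkψ l α β _ a b rfl), map_smul, hHsr, hsr, map_smul, smul_sub]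
  · -- ψ ∂ left
    intro l α β a b
    apply hiinj (α * β)
    rw [map_smul, hinv _ _ (hkψ l α β _ (D a) b rfl),
      hinv _ _ (hkψ l α β _ a b rfl), hsD, hHdl, hdl, map_smul, smul_sub]
  · -- ψ ∂ right
    intro l α β a b
    apply hiinj (α * β)
    rw [map_add, map_smul, hiD, hinv _ _ (hkψ l α β _ a (D b) rfl),
      hinv _ _ (hkψ l α β _ a b rfl), hsD, hHdr, hdr, map_add, map_smul,
      hsD, hHDsub, smul_sub]
    abel
  · -- χ additive
    intro ω a a'
    apply hiinj ω
    rw [map_add (i ω), hinv _ _ (hkχ ω (a + a')), hinv _ _ (hkχ ω a),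
      hinv _ _ (hkχ ω a'), map_add (s ω), hPHa, hPa, map_add]
    abel
  · -- χ smul
    intro ω c a
    apply hiinj ω
    rw [map_smul (i ω), hinv _ _ (hkχ ω (c • a)), hinv _ _ (hkχ ω a),
      map_smul (s ω), hPHs, hPs, map_smul, smul_sub]
  · -- χ ∂
    intro ω a
    apply hiinj ω
    rw [hiD, hinv _ _ (hkχ ω (D a)), hinv _ _ (hkχ ω a), hsD, hPHD, hPD,
      hsD, hHDsub]
  · -- δ²ψ = 0
    intro l m α β γ a b c
    simp only [delta2, mul_assoc]
    apply hiinj (α * (β * γ))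
    rw [map_zero]
    simp only [map_sub, map_add]
    rw [hinv _ _ (hkL l α (β * γ) _ a _ rfl (hpi _ _)),
      hinv _ _ (hkψ m β γ _ b c rfl),
      hinv _ _ (hkψ (l + m) (α * β) γ _ (mul l α β a b) c (mul_assoc α β γ)),
      hinv _ _ (hkψ l α (β * γ) _ a (mul m β γ b c) rfl),
      hinv _ _ (hkR (l + m) (α * β) γ _ _ c (mul_assoc α β γ) (hpi _ _)),
      hinv _ _ (hkψ l α β _ a b rfl)]
    rw [hHsubr, hHsubl, hHassoc, hassoc]
    abel
  · -- ∂¹χ + Φ²ψ = 0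
    intro l α β a b
    simp only [dRB1, phi2]
    apply hiinj (α * β)
    rw [map_zero]
    have iadd : ∀ x y : M, i (α * β) (x + y) = i (α * β) x + i (α * β) y :=
      map_add _
    have isub : ∀ x y : M, i (α * β) (x - y) = i (α * β) x - i (α * β) y :=
      map_sub _
    have ismul : ∀ (c : F) (x : M), i (α * β) (c • x) = c • i (α * β) x :=
      map_smul _
    simp only [iadd, isub, ismul, hiP (α * β)]
    rw [hinv _ _ (hkL l α β _ (P α a) _ rfl (hpi _ _)),
      hinv _ _ (hkL l α β _ a _ rfl (hpi _ _)),
      hinv _ _ (hkχ (α * β) _),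
      hinv _ _ (hkR l α β _ _ (P β b) rfl (hpi _ _)),
      hinv _ _ (hkR l α β _ _ b rfl (hpi _ _)),
      hinv _ _ (hkψ l α β _ (P α a) (P β b) rfl),
      hinv _ _ (hkψ l α β _ (P α a) b rfl),
      hinv _ _ (hkψ l α β _ a (P β b) rfl),
      hinv _ _ (hkψ l α β _ a b rfl),
      hinv _ _ (hkχ β b), hinv _ _ (hkχ α a)]
    have h0 := hzero l α β
      (Function.invFun (⇑(i α)) (PH α (s α a) - s α (P α a)))
      (Function.invFun (⇑(i β)) (PH β (s β b) - s β (P β b)))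
    rw [hinv _ _ (hkχ α a), hinv _ _ (hkχ β b)] at h0
    simp only [hHsubl, hHsubr] at h0
    rw [hPHrb] at h0
    simp only [hPHa, hPHs] at h0
    rw [hPrb]
    simp only [hHsubl, hHsubr, hPHsub, map_add, map_smul, hPHa, hPHs,
      smul_sub]
    rw [← neg_eq_zero]
    conv_rhs => rw [← h0]
    abel
end

section
/- Let 0 → M → Â → A → 0 be an abelian extension of a Rota-Baxter family Ω-associative conformal algebra (A, ·, (P_ω)) of weight q by (M, (P_{M,ω})), with structure maps (i_ω), (p_ω), and let (s¹_ω) and (s²_ω) be two sections, with associated cocycles (ψ¹, χ¹) and (ψ², χ²), where ψ^j_{λ;α,β}(a,b) := i_{αβ}^{-1}( s^j_α(a) ·̂_{λ;α,β} s^j_β(b) − s^j_{αβ}(a ·_{λ;α,β} b) ) and χ^j_ω(a) := i_ω^{-1}( P̂_ω(s^j_ω(a)) − s^j_ω(P_ω(a)) ). Then: (i) the two sections induce the same bimodule structure on M, i.e. i_{αβ}^{-1}( s¹_α(a) ·̂_{λ;α,β} i_β(m) ) = i_{αβ}^{-1}( s²_α(a) ·̂_{λ;α,β} i_β(m) ) and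 i_{αβ}^{-1}( i_α(m) ·̂_{λ;α,β} s¹_β(a) ) = i_{αβ}^{-1}( i_α(m) ·̂_{λ;α,β} s²_β(a) ) for all a ∈ A, m ∈ M; and (ii) setting γ_ω(a) := i_ω^{-1}( s¹_ω(a) − s²_ω(a) ), one has ψ¹_{λ;α,β}(a,b) = ψ²_{λ;α,β}(a,b) + (δ¹γ)_{λ;α,β}(a,b) and χ¹_ω(a) = χ²_ω(a) − (Φ¹γ)_ω(a); in particular the two cocycles are cohomologous. -/
/-- The Hochschild differential `δ¹` applied to a `1`-cochain `γ`. -/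
def delta1 {F : Type*} [Field F] {Ω : Type*} [Semigroup Ω]
    {A M : Type*} [AddCommGroup A] [Module F A] [AddCommGroup M] [Module F M]
    (mul : F → Ω → Ω → A → A → A)
    (al : F → Ω → Ω → A → M → M) (ar : F → Ω → Ω → M → A → M)
    (g : Ω → A → M)
    (l : F) (α β : Ω) (a b : A) : M :=
  al l α β a (g β b) - g (α * β) (mul l α β a b) + ar l α β (g α a) b

/-- The map `Φ¹` applied to a `1`-cochain `γ`: `(Φ¹γ)_ω(a) = γ_ω(P_ω a) − P_{M,ω}(γ_ω a)`. -/
def phi1 {F : Type*} [Field F] {Ω : Type*}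
    {A M : Type*} [AddCommGroup A] [Module F A] [AddCommGroup M] [Module F M]
    (P : Ω → A → A) (PM : Ω → M → M)
    (g : Ω → A → M) (ω : Ω) (a : A) : M :=
  g ω (P ω a) - PM ω (g ω a)

/-- Two sections of an abelian extension of Rota-Baxter family `Ω`-associative
conformal algebras induce the same bimodule structure on `M`, and the corresponding
`2`-cocycles differ by the coboundary of `γ_ω = i_ω⁻¹(s¹_ω − s²_ω)`:
`ψ¹ = ψ² + δ¹γ` and `χ¹ = χ² − Φ¹γ`; in particular they are cohomologous. -/
theorem stmt_16 {F : Type*} [Field F] {Ω : Type*} [Semigroup Ω]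
    {A Ahat M : Type*} [AddCommGroup A] [Module F A]
    [AddCommGroup Ahat] [Module F Ahat] [AddCommGroup M] [Module F M] (q : F)
    (D : A → A) (mul : F → Ω → Ω → A → A → A)
    (hA : OmegaConfFun D mul)
    (P : Ω → A → A) (hP : IsRBFamilyOp D mul q P)
    (DH : Ahat → Ahat) (hmul : F → Ω → Ω → Ahat → Ahat → Ahat)
    (hAhat : OmegaConfFun DH hmul)
    (PH : Ω → Ahat → Ahat) (hPH : IsRBFamilyOp DH hmul q PH)
    (DM : M →ₗ[F] M) (PM : Ω → M →ₗ[F] M)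
    (hPMD : ∀ (ω : Ω) (u : M), PM ω (DM u) = DM (PM ω u))
    (i : Ω → M →ₗ[F] Ahat) (p : Ω → Ahat →ₗ[F] A)
    (hiD : ∀ (ω : Ω) (u : M), i ω (DM u) = DH (i ω u))
    (hpD : ∀ (ω : Ω) (x : Ahat), p ω (DH x) = D (p ω x))
    (hiinj : ∀ ω : Ω, Function.Injective (i ω))
    (hpsurj : ∀ ω : Ω, Function.Surjective (p ω))
    (hker : ∀ (ω : Ω) (x : Ahat), p ω x = 0 ↔ x ∈ Set.range (i ω))
    (hzero : ∀ (l : F) (α β : Ω) (u v : M), hmul l α β (i α u) (i β v) = 0)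
    (hpmul : ∀ (l : F) (α β : Ω) (x y : Ahat),
      p (α * β) (hmul l α β x y) = mul l α β (p α x) (p β y))
    (hiP : ∀ (ω : Ω) (u : M), i ω (PM ω u) = PH ω (i ω u))
    (hpP : ∀ (ω : Ω) (x : Ahat), p ω (PH ω x) = P ω (p ω x))
    -- two sections
    (s₁ s₂ : Ω → A →ₗ[F] Ahat)
    (hs₁ : ∀ (ω : Ω) (a : A), p ω (s₁ ω a) = a)
    (hs₁D : ∀ (ω : Ω) (a : A), s₁ ω (D a) = DH (s₁ ω a))
    (hs₂ : ∀ (ω : Ω) (a : A), p ω (s₂ ω a) = a)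
    (hs₂D : ∀ (ω : Ω) (a : A), s₂ ω (D a) = DH (s₂ ω a)) :
    -- (i) the two sections induce the same bimodule structure on `M`
    (∀ (l : F) (α β : Ω) (a : A) (u : M),
        Function.invFun (⇑(i (α * β))) (hmul l α β (s₁ α a) (i β u))
          = Function.invFun (⇑(i (α * β))) (hmul l α β (s₂ α a) (i β u)))
      ∧ (∀ (l : F) (α β : Ω) (u : M) (a : A),
          Function.invFun (⇑(i (α * β))) (hmul l α β (i α u) (s₁ β a))
            = Function.invFun (⇑(i (α * β))) (hmul l α β (i α u) (s₂ β a)))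
      -- (ii) the associated cocycles are cohomologous, via `γ_ω = i_ω⁻¹(s¹_ω − s²_ω)`
      ∧ (∀ (l : F) (α β : Ω) (a b : A),
          Function.invFun (⇑(i (α * β)))
              (hmul l α β (s₁ α a) (s₁ β b) - s₁ (α * β) (mul l α β a b))
            = Function.invFun (⇑(i (α * β)))
                (hmul l α β (s₂ α a) (s₂ β b) - s₂ (α * β) (mul l α β a b))
              + delta1 mul
                  (fun l α β a u =>
                    Function.invFun (⇑(i (α * β))) (hmul l α β (s₂ α a) (i β u)))
                  (fun l α β u a =>
                    Function.invFun (⇑(i (α * β))) (hmul l α β (i α u) (s₂ β a)))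
                  (fun ω a => Function.invFun (⇑(i ω)) (s₁ ω a - s₂ ω a))
                  l α β a b)
      ∧ (∀ (ω : Ω) (a : A),
          Function.invFun (⇑(i ω)) (PH ω (s₁ ω a) - s₁ ω (P ω a))
            = Function.invFun (⇑(i ω)) (PH ω (s₂ ω a) - s₂ ω (P ω a))
              - phi1 (F := F) P (fun ω => ⇑(PM ω))
                  (fun ω a => Function.invFun (⇑(i ω)) (s₁ ω a - s₂ ω a)) ω a) := by

  obtain ⟨-, -, -, hAsl, -, hAsr, -, -, -⟩ := hA
  obtain ⟨-, -, hHal, -, hHar, -, -, -, -⟩ := hAhat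
  obtain ⟨hPHadd, -, -, -⟩ := hPH
  -- zero lemmas in A
  have mulz : ∀ (l : F) (α β : Ω) (a : A), mul l α β a 0 = 0 := by
    intro l α β a; simpa using hAsr l 0 α β a 0
  have mulz' : ∀ (l : F) (α β : Ω) (b : A), mul l α β 0 b = 0 := by
    intro l α β b; simpa using hAsl l 0 α β 0 b
  -- subtraction lemmas in Ahat
  have hsubl : ∀ (l : F) (α β : Ω) (x y z : Ahat),
      hmul l α β (x - y) z = hmul l α β x z - hmul l α β y z := by
    intro l α β x y z
    have h := hHal l α β (x - y) y z
    rw [sub_add_cancel] at h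
    exact eq_sub_of_add_eq h.symm
  have hsubr : ∀ (l : F) (α β : Ω) (x y z : Ahat),
      hmul l α β x (y - z) = hmul l α β x y - hmul l α β x z := by
    intro l α β x y z
    have h := hHar l α β x (y - z) z
    rw [sub_add_cancel] at h
    exact eq_sub_of_add_eq h.symm
  have PHsub : ∀ (ω : Ω) (x y : Ahat), PH ω (x - y) = PH ω x - PH ω y := by
    intro ω x y
    have h := hPHadd ω (x - y) y
    rw [sub_add_cancel] at h
    exact eq_sub_of_add_eq h.symm
  -- inverse lemma
  have inv_eq : ∀ (ω : Ω) (x : Ahat), p ω x = 0 →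
      i ω (Function.invFun (⇑(i ω)) x) = x := by
    intro ω x h
    exact Function.invFun_eq ((hker ω x).mp h)
  have hpi : ∀ (ω : Ω) (u : M), p ω (i ω u) = 0 := by
    intro ω u; exact (hker ω (i ω u)).mpr ⟨u, rfl⟩
  have hγ : ∀ (ω : Ω) (a : A),
      i ω (Function.invFun (⇑(i ω)) (s₁ ω a - s₂ ω a)) = s₁ ω a - s₂ ω a := by
    intro ω a
    apply inv_eq
    rw [map_sub, hs₁, hs₂, sub_self]
  -- the two sections multiply equally against i-elements
  have keymull : ∀ (l : F) (α β : Ω) (a : A) (u : M),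
      hmul l α β (s₁ α a) (i β u) = hmul l α β (s₂ α a) (i β u) := by
    intro l α β a u
    have h : hmul l α β (s₁ α a - s₂ α a) (i β u) = 0 := by
      rw [← hγ α a]; exact hzero _ _ _ _ _
    rw [hsubl] at h
    exact sub_eq_zero.mp h
  have keymulr : ∀ (l : F) (α β : Ω) (u : M) (b : A),
      hmul l α β (i α u) (s₁ β b) = hmul l α β (i α u) (s₂ β b) := by
    intro l α β u b
    have h : hmul l α β (i α u) (s₁ β b - s₂ β b) = 0 := by
      rw [← hγ β b]; exact hzero _ _ _ _ _
    rw [hsubr] at h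
    exact sub_eq_zero.mp h
  have swap : ∀ (l : F) (α β : Ω) (a b : A),
      hmul l α β (s₁ α a - s₂ α a) (s₁ β b) = hmul l α β (s₁ α a - s₂ α a) (s₂ β b) := by
    intro l α β a b
    rw [← hγ α a]
    exact keymulr l α β _ b
  refine ⟨?_, ?_, ?_, ?_⟩
  · intro l α β a u
    exact congrArg _ (keymull l α β a u)
  · intro l α β u a
    exact congrArg _ (keymulr l α β u a)
  · intro l α β a b
    simp only [delta1]
    apply hiinj (α * β)
    simp only [map_add, map_sub]
    have e1 : i (α * β) (Function.invFun (⇑(i (α * β)))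
        (hmul l α β (s₁ α a) (s₁ β b) - s₁ (α * β) (mul l α β a b)))
        = hmul l α β (s₁ α a) (s₁ β b) - s₁ (α * β) (mul l α β a b) := by
      apply inv_eq
      rw [map_sub, hpmul, hs₁, hs₁, hs₁, sub_self]
    have e2 : i (α * β) (Function.invFun (⇑(i (α * β)))
        (hmul l α β (s₂ α a) (s₂ β b) - s₂ (α * β) (mul l α β a b)))
        = hmul l α β (s₂ α a) (s₂ β b) - s₂ (α * β) (mul l α β a b) := by
      apply inv_eq
      rw [map_sub, hpmul, hs₂, hs₂, hs₂, sub_self]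
    have e3 : i (α * β) (Function.invFun (⇑(i (α * β)))
        (hmul l α β (s₂ α a) (i β (Function.invFun (⇑(i β)) (s₁ β b - s₂ β b)))))
        = hmul l α β (s₂ α a) (i β (Function.invFun (⇑(i β)) (s₁ β b - s₂ β b))) := by
      apply inv_eq
      rw [hpmul, hs₂, hpi, mulz]
    have e4 : i (α * β) (Function.invFun (⇑(i (α * β)))
        (hmul l α β (i α (Function.invFun (⇑(i α)) (s₁ α a - s₂ α a))) (s₂ β b)))
        = hmul l α β (i α (Function.invFun (⇑(i α)) (s₁ α a - s₂ α a))) (s₂ β b) := by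
      apply inv_eq
      rw [hpmul, hpi, hs₂, mulz']
    rw [e1, e2, e3, e4, hγ (α * β) (mul l α β a b), hγ α a, hγ β b,
      ← swap l α β a b, hsubl, hsubr]
    abel
  · intro ω a
    simp only [phi1]
    apply hiinj ω
    simp only [map_sub]
    have e1 : i ω (Function.invFun (⇑(i ω)) (PH ω (s₁ ω a) - s₁ ω (P ω a)))
        = PH ω (s₁ ω a) - s₁ ω (P ω a) := by
      apply inv_eq
      rw [map_sub, hpP, hs₁, hs₁, sub_self]
    have e2 : i ω (Function.invFun (⇑(i ω)) (PH ω (s₂ ω a) - s₂ ω (P ω a)))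
        = PH ω (s₂ ω a) - s₂ ω (P ω a) := by
      apply inv_eq
      rw [map_sub, hpP, hs₂, hs₂, sub_self]
    rw [e1, e2, hγ ω (P ω a), hiP, hγ ω a, PHsub]
    abel
end

section
/- Let (Â₁, ·̂₁, (P̂¹_ω)) and (Â₂, ·̂₂, (P̂²_ω)) be two abelian extensions of a Rota-Baxter family Ω-associative conformal algebra (A, ·, (P_ω)) of weight q by (M, (P_{M,ω})), with structure maps (i¹_ω), (p¹_ω) and (i²_ω), (p²_ω), and let (ζ_ω)_{ω∈Ω} be an isomorphism between them: each ζ_ω : Â₁ → Â₂ is a bijective linear map commuting with ∂, with ζ_{αβ}(x ·̂₁_{λ;α,β} y) = ζ_α(x) ·̂₂_{λ;α,β} ζ_β(y), ζ_ω ∘ P̂¹_ω = P̂²_ω ∘ ζ_ω, ζ_ω ∘ i¹_ω = i²_ω, and p²_ω ∘ ζ_ω = p¹_ω. Let (s¹_ω) be a section of the first extension. Then s²_ω := ζ_ω ∘ s¹_ω is a section of the second extension, and the associated cocycles coincide: ψ²_{λ;α,β}(a,b) = ψ¹_{λ;α,β}(a,b) and χ²_ω(a) = χ¹_ω(a) for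 all a, b ∈ A, λ ∈ 𝔽, α, β, ω ∈ Ω, where ψ^j_{λ;α,β}(a,b) := (i^j_{αβ})^{-1}( s^j_α(a) ·̂ⱼ_{λ;α,β} s^j_β(b) − s^j_{αβ}(a ·_{λ;α,β} b) ) and χ^j_ω(a) := (i^j_ω)^{-1}( P̂^j_ω(s^j_ω(a)) − s^j_ω(P_ω(a)) ). -/
/-- Two isomorphic abelian extensions of a Rota-Baxter family `Ω`-associative
conformal algebra give rise to the same `2`-cocycle: if `(ζ_ω)` is an isomorphism of
extensions and `(s¹_ω)` is a section of the first one, then `s²_ω := ζ_ω ∘ s¹_ω` is a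
section of the second one and the associated cocycles coincide. -/
theorem stmt_17 {F : Type*} [Field F] {Ω : Type*} [Semigroup Ω]
    {A Ahat₁ Ahat₂ M : Type*} [AddCommGroup A] [Module F A]
    [AddCommGroup Ahat₁] [Module F Ahat₁] [AddCommGroup Ahat₂] [Module F Ahat₂]
    [AddCommGroup M] [Module F M] (q : F)
    (D : A → A) (mul : F → Ω → Ω → A → A → A)
    (hA : OmegaConfFun D mul)
    (P : Ω → A → A) (hP : IsRBFamilyOp D mul q P)
    (DM : M →ₗ[F] M) (PM : Ω → M →ₗ[F] M)
    (hPMD : ∀ (ω : Ω) (u : M), PM ω (DM u) = DM (PM ω u))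
    -- the first extension
    (DH₁ : Ahat₁ → Ahat₁) (hmul₁ : F → Ω → Ω → Ahat₁ → Ahat₁ → Ahat₁)
    (hAhat₁ : OmegaConfFun DH₁ hmul₁)
    (PH₁ : Ω → Ahat₁ → Ahat₁) (hPH₁ : IsRBFamilyOp DH₁ hmul₁ q PH₁)
    (i₁ : Ω → M →ₗ[F] Ahat₁) (p₁ : Ω → Ahat₁ →ₗ[F] A)
    (hiD₁ : ∀ (ω : Ω) (u : M), i₁ ω (DM u) = DH₁ (i₁ ω u))
    (hpD₁ : ∀ (ω : Ω) (x : Ahat₁), p₁ ω (DH₁ x) = D (p₁ ω x))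
    (hiinj₁ : ∀ ω : Ω, Function.Injective (i₁ ω))
    (hpsurj₁ : ∀ ω : Ω, Function.Surjective (p₁ ω))
    (hker₁ : ∀ (ω : Ω) (x : Ahat₁), p₁ ω x = 0 ↔ x ∈ Set.range (i₁ ω))
    (hzero₁ : ∀ (l : F) (α β : Ω) (u v : M), hmul₁ l α β (i₁ α u) (i₁ β v) = 0)
    (hpmul₁ : ∀ (l : F) (α β : Ω) (x y : Ahat₁),
      p₁ (α * β) (hmul₁ l α β x y) = mul l α β (p₁ α x) (p₁ β y))
    (hiP₁ : ∀ (ω : Ω) (u : M), i₁ ω (PM ω u) = PH₁ ω (i₁ ω u))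
    (hpP₁ : ∀ (ω : Ω) (x : Ahat₁), p₁ ω (PH₁ ω x) = P ω (p₁ ω x))
    -- the second extension
    (DH₂ : Ahat₂ → Ahat₂) (hmul₂ : F → Ω → Ω → Ahat₂ → Ahat₂ → Ahat₂)
    (hAhat₂ : OmegaConfFun DH₂ hmul₂)
    (PH₂ : Ω → Ahat₂ → Ahat₂) (hPH₂ : IsRBFamilyOp DH₂ hmul₂ q PH₂)
    (i₂ : Ω → M →ₗ[F] Ahat₂) (p₂ : Ω → Ahat₂ →ₗ[F] A)
    (hiD₂ : ∀ (ω : Ω) (u : M), i₂ ω (DM u) = DH₂ (i₂ ω u))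
    (hpD₂ : ∀ (ω : Ω) (x : Ahat₂), p₂ ω (DH₂ x) = D (p₂ ω x))
    (hiinj₂ : ∀ ω : Ω, Function.Injective (i₂ ω))
    (hpsurj₂ : ∀ ω : Ω, Function.Surjective (p₂ ω))
    (hker₂ : ∀ (ω : Ω) (x : Ahat₂), p₂ ω x = 0 ↔ x ∈ Set.range (i₂ ω))
    (hzero₂ : ∀ (l : F) (α β : Ω) (u v : M), hmul₂ l α β (i₂ α u) (i₂ β v) = 0)
    (hpmul₂ : ∀ (l : F) (α β : Ω) (x y : Ahat₂),
      p₂ (α * β) (hmul₂ l α β x y) = mul l α β (p₂ α x) (p₂ β y))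
    (hiP₂ : ∀ (ω : Ω) (u : M), i₂ ω (PM ω u) = PH₂ ω (i₂ ω u))
    (hpP₂ : ∀ (ω : Ω) (x : Ahat₂), p₂ ω (PH₂ ω x) = P ω (p₂ ω x))
    -- an isomorphism of extensions
    (ζ : Ω → Ahat₁ →ₗ[F] Ahat₂)
    (hζbij : ∀ ω : Ω, Function.Bijective (ζ ω))
    (hζD : ∀ (ω : Ω) (x : Ahat₁), ζ ω (DH₁ x) = DH₂ (ζ ω x))
    (hζmul : ∀ (l : F) (α β : Ω) (x y : Ahat₁),
      ζ (α * β) (hmul₁ l α β x y) = hmul₂ l α β (ζ α x) (ζ β y))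
    (hζP : ∀ (ω : Ω) (x : Ahat₁), ζ ω (PH₁ ω x) = PH₂ ω (ζ ω x))
    (hζi : ∀ (ω : Ω) (u : M), ζ ω (i₁ ω u) = i₂ ω u)
    (hζp : ∀ (ω : Ω) (x : Ahat₁), p₂ ω (ζ ω x) = p₁ ω x)
    -- a section of the first extension
    (s₁ : Ω → A →ₗ[F] Ahat₁)
    (hs₁ : ∀ (ω : Ω) (a : A), p₁ ω (s₁ ω a) = a)
    (hs₁D : ∀ (ω : Ω) (a : A), s₁ ω (D a) = DH₁ (s₁ ω a)) :
    -- `s² := ζ ∘ s¹` is a section of the second extension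
    (∀ (ω : Ω) (a : A), p₂ ω (ζ ω (s₁ ω a)) = a)
      ∧ (∀ (ω : Ω) (a : A), ζ ω (s₁ ω (D a)) = DH₂ (ζ ω (s₁ ω a)))
      -- the two associated 2-cochains coincide
      ∧ (∀ (l : F) (α β : Ω) (a b : A),
          Function.invFun (⇑(i₂ (α * β)))
              (hmul₂ l α β (ζ α (s₁ α a)) (ζ β (s₁ β b))
                - ζ (α * β) (s₁ (α * β) (mul l α β a b)))
            = Function.invFun (⇑(i₁ (α * β)))
                (hmul₁ l α β (s₁ α a) (s₁ β b) - s₁ (α * β) (mul l α β a b)))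
      -- the two associated 1-cochains coincide
      ∧ (∀ (ω : Ω) (a : A),
          Function.invFun (⇑(i₂ ω)) (PH₂ ω (ζ ω (s₁ ω a)) - ζ ω (s₁ ω (P ω a)))
            = Function.invFun (⇑(i₁ ω)) (PH₁ ω (s₁ ω a) - s₁ ω (P ω a))) := by
  refine ⟨fun ω a => by rw [hζp, hs₁], fun ω a => by rw [hs₁D, hζD], ?_, ?_⟩
  · intro l α β a b
    have hx : p₁ (α * β) (hmul₁ l α β (s₁ α a) (s₁ β b) - s₁ (α * β) (mul l α β a b)) = 0 := by
      simp [hpmul₁, hs₁]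
    obtain ⟨u, hu⟩ := (hker₁ _ _).mp hx
    have hζx : hmul₂ l α β (ζ α (s₁ α a)) (ζ β (s₁ β b))
        - ζ (α * β) (s₁ (α * β) (mul l α β a b)) = i₂ (α * β) u := by
      rw [← hζmul, ← map_sub, ← hu, hζi]
    rw [hζx, ← hu, Function.leftInverse_invFun (hiinj₂ _),
      Function.leftInverse_invFun (hiinj₁ _)]
  · intro ω a
    have hx : p₁ ω (PH₁ ω (s₁ ω a) - s₁ ω (P ω a)) = 0 := by
      simp [hpP₁, hs₁]
    obtain ⟨u, hu⟩ := (hker₁ _ _).mp hx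
    have hζx : PH₂ ω (ζ ω (s₁ ω a)) - ζ ω (s₁ ω (P ω a)) = i₂ ω u := by
      rw [← hζP, ← map_sub, ← hu, hζi]
    rw [hζx, ← hu, Function.leftInverse_invFun (hiinj₂ _),
      Function.leftInverse_invFun (hiinj₁ _)]
end

section
/- Let (A, ·, (P_ω)) be a Rota-Baxter family Ω-associative conformal algebra of weight q over a field 𝔽, (M, (P_{M,ω})) a Rota-Baxter family bimodule over it, ψ a 2-cochain and χ a 1-cochain with coefficients in M. Equip A ⊕ M with ∂(a, m) := (∂a, ∂m), the products (a, m) ·^ψ_{λ;α,β} (b, n) := (a ·_{λ;α,β} b, a ·_{λ;α,β} n + m ·_{λ;α,β} b + ψ_{λ;α,β}(a, b)), and the maps P^χ_ω(a, m) := (P_ω(a), χ_ω(a) + P_{M,ω}(m)). Then (A ⊕ M, ·^ψ, (P^χ_ω)) is a Rota-Baxter family Ω-associative conformal algebra of weight q if and only if (ψ, χ) is a 2-cocycle, i.e. δ²ψ = 0 and ∂¹χ + Φ²ψ = 0. -/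
/-- Given a Rota-Baxter family `Ω`-associative conformal algebra `(A, ·, (P_ω))` of
weight `q`, a Rota-Baxter family bimodule `(M, (P_{M,ω}))`, a `2`-cochain `ψ` and a
`1`-cochain `χ`, the twisted structure on `A ⊕ M`, given by
`(a,m) ·^ψ (b,n) = (a·b, a·n + m·b + ψ(a,b))` and `P^χ_ω(a,m) = (P_ω a, χ_ω a + P_{M,ω} m)`,
is a Rota-Baxter family `Ω`-associative conformal algebra of weight `q` if and only if
`(ψ, χ)` is a `2`-cocycle, i.e. `δ²ψ = 0` and `∂¹χ + Φ²ψ = 0`. -/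
theorem stmt_18 {F : Type*} [Field F] {Ω : Type*} [Semigroup Ω]
    {A M : Type*} [AddCommGroup A] [Module F A] [AddCommGroup M] [Module F M] (q : F)
    (D : A → A) (DM : M → M) (mul : F → Ω → Ω → A → A → A)
    (al : F → Ω → Ω → A → M → M) (ar : F → Ω → Ω → M → A → M)
    (hA : OmegaConfFun D mul)
    (P : Ω → A → A) (hP : IsRBFamilyOp D mul q P)
    (PM : Ω → M → M)
    (hM : OmegaBimodFun D DM mul al ar)
    (hRBM : IsRBFBimod DM al ar q P PM)
    -- `ψ` is a 2-cochain
    (ψ : F → Ω → Ω → A → A → M)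
    (hψadd1 : ∀ (l : F) (α β : Ω) (a a' b : A),
      ψ l α β (a + a') b = ψ l α β a b + ψ l α β a' b)
    (hψsmul1 : ∀ (l c : F) (α β : Ω) (a b : A), ψ l α β (c • a) b = c • ψ l α β a b)
    (hψadd2 : ∀ (l : F) (α β : Ω) (a b b' : A),
      ψ l α β a (b + b') = ψ l α β a b + ψ l α β a b')
    (hψsmul2 : ∀ (l c : F) (α β : Ω) (a b : A), ψ l α β a (c • b) = c • ψ l α β a b)
    (hψsesq1 : ∀ (l : F) (α β : Ω) (a b : A), ψ l α β (D a) b = -l • ψ l α β a b)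
    (hψsesq2 : ∀ (l : F) (α β : Ω) (a b : A),
      ψ l α β a (D b) = DM (ψ l α β a b) + l • ψ l α β a b)
    -- `χ` is a 1-cochain
    (χ : Ω → A → M)
    (hχadd : ∀ (ω : Ω) (a a' : A), χ ω (a + a') = χ ω a + χ ω a')
    (hχsmul : ∀ (ω : Ω) (c : F) (a : A), χ ω (c • a) = c • χ ω a)
    (hχD : ∀ (ω : Ω) (a : A), χ ω (D a) = DM (χ ω a)) :
    (OmegaConfFun (F := F) (fun u : A × M => (D u.1, DM u.2))
          (fun l α β u v =>
            (mul l α β u.1 v.1,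
              al l α β u.1 v.2 + ar l α β u.2 v.1 + ψ l α β u.1 v.1))
        ∧ IsRBFamilyOp (F := F) (fun u : A × M => (D u.1, DM u.2))
            (fun l α β u v =>
              (mul l α β u.1 v.1,
                al l α β u.1 v.2 + ar l α β u.2 v.1 + ψ l α β u.1 v.1))
            q (fun ω u => (P ω u.1, χ ω u.1 + PM ω u.2)))
      ↔ ((∀ (l m : F) (α β γ : Ω) (a b c : A),
            delta2 mul al ar ψ l m α β γ a b c = 0)
          ∧ (∀ (l : F) (α β : Ω) (a b : A),
              dRB1 mul al ar q P PM χ l α β a b + phi2 q P PM ψ l α β a b = 0)) := by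
  obtain ⟨hDadd, hDsmul, hm1a, hm1s, hm2a, hm2s, hms1, hms2, hAassoc⟩ := hA
  obtain ⟨hPadd, hPsmul, hPD, hPrb⟩ := hP
  obtain ⟨hDMadd, hDMsmul, hal1a, hal1s, hal2a, hal2s, harAa, harAs, harUa, harUs,
    halD, halDM, harDM, harD, hass1, hass2, hass3⟩ := hM
  obtain ⟨hPMa, hPMs, hPMD, hRBal, hRBar⟩ := hRBM
  -- zero lemmas
  have mz2 : ∀ (l : F) (α β : Ω) (a : A), mul l α β a 0 = 0 := fun l α β a => by
    simpa using hm2s l 0 α β a 0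
  have mz1 : ∀ (l : F) (α β : Ω) (b : A), mul l α β 0 b = 0 := fun l α β b => by
    simpa using hm1s l 0 α β 0 b
  have alz : ∀ (l : F) (α β : Ω) (a : A), al l α β a 0 = 0 := fun l α β a => by
    simpa using hal2s l 0 α β a 0
  have alz1 : ∀ (l : F) (α β : Ω) (u : M), al l α β 0 u = 0 := fun l α β u => by
    simpa using hal1s l 0 α β 0 u
  have arz : ∀ (l : F) (α β : Ω) (a : A), ar l α β 0 a = 0 := fun l α β a => by
    simpa using harUs l 0 α β 0 a
  have arz2 : ∀ (l : F) (α β : Ω) (u : M), ar l α β u 0 = 0 := fun l α β u => by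
    simpa using harAs l 0 α β u 0
  have PMz : ∀ (ω : Ω), PM ω 0 = 0 := fun ω => by
    simpa using hPMs ω 0 0
  have chz : ∀ (ω : Ω), χ ω 0 = 0 := fun ω => by
    simpa using hχsmul ω 0 0
  have psz1 : ∀ (l : F) (α β : Ω) (b : A), ψ l α β 0 b = 0 := fun l α β b => by
    simpa using hψsmul1 l 0 α β 0 b
  have psz2 : ∀ (l : F) (α β : Ω) (a : A), ψ l α β a 0 = 0 := fun l α β a => by
    simpa using hψsmul2 l 0 α β a 0
  constructor
  · rintro ⟨hC, hR⟩
    obtain ⟨-, -, -, -, -, -, -, -, hCassoc⟩ := hC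
    obtain ⟨-, -, -, hCrb⟩ := hR
    constructor
    · intro l m α β γ a b c
      have h := congrArg Prod.snd (hCassoc l m α β γ (a, 0) (b, 0) (c, 0))
      simp only [mz1, mz2, alz, alz1, arz, arz2, psz1, psz2, zero_add, add_zero] at h
      unfold delta2
      linear_combination (norm := module) -h
    · intro l α β a b
      have h := congrArg Prod.snd (hCrb l α β (a, 0) (b, 0))
      simp only [Prod.mk_add_mk, Prod.smul_mk, PMz, chz, mz1, mz2, alz, alz1, arz, arz2,
        psz1, psz2, zero_add, add_zero, smul_zero, hPMa, hPMs] at h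
      unfold dRB1 phi2
      simp only [hPMa, hPMs]
      linear_combination (norm := module) h
  · rintro ⟨hδ, hc⟩
    have hδ' : ∀ (l m : F) (α β γ : Ω) (a b c : A),
        al l α (β * γ) a (ψ m β γ b c) - ψ (l + m) (α * β) γ (mul l α β a b) c
          + ψ l α (β * γ) a (mul m β γ b c)
          - ar (l + m) (α * β) γ (ψ l α β a b) c = 0 := by
      intro l m α β γ a b c
      have := hδ l m α β γ a b c
      unfold delta2 at this
      exact this
    have hc' : ∀ (l : F) (α β : Ω) (a b : A),
        (al l α β (P α a) (χ β b) - PM (α * β) (al l α β a (χ β b))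
          - χ (α * β) (mul l α β (P α a) b + mul l α β a (P β b) + q • mul l α β a b)
          + ar l α β (χ α a) (P β b) - PM (α * β) (ar l α β (χ α a) b))
        + (ψ l α β (P α a) (P β b)
          - PM (α * β) (ψ l α β (P α a) b + ψ l α β a (P β b) + q • ψ l α β a b)) = 0 := by
      intro l α β a b
      have := hc l α β a b
      unfold dRB1 phi2 at this
      exact this
    constructor
    · refine ⟨?_, ?_, ?_, ?_, ?_, ?_, ?_, ?_, ?_⟩
      · intro u v
        simp [Prod.fst_add, Prod.snd_add, hDadd, hDMadd]
      · intro c u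
        simp [Prod.smul_fst, Prod.smul_snd, hDsmul, hDMsmul]
      · intro l α β u u' v
        refine Prod.ext ?_ ?_
        · simp [hm1a]
        · simp only [Prod.fst_add, Prod.snd_add, hm1a, hal1a, harUa, hψadd1]
          all_goals module
      · intro l c α β u v
        refine Prod.ext ?_ ?_
        · simp [hm1s]
        · simp only [Prod.smul_fst, Prod.smul_snd, hm1s, hal1s, harUs, hψsmul1, smul_add]
          all_goals module
      · intro l α β u v v'
        refine Prod.ext ?_ ?_
        · simp [hm2a]
        · simp only [Prod.fst_add, Prod.snd_add, hm2a, hal2a, harAa, hψadd2]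
          all_goals module
      · intro l c α β u v
        refine Prod.ext ?_ ?_
        · simp [hm2s]
        · simp only [Prod.smul_fst, Prod.smul_snd, hm2s, hal2s, harAs, hψsmul2, smul_add]
          all_goals module
      · intro l α β u v
        refine Prod.ext ?_ ?_
        · simp [hms1]
        · simp only [Prod.smul_fst, Prod.smul_snd, hms1, halD, harDM, hψsesq1, smul_add]
          all_goals module
      · intro l α β u v
        refine Prod.ext ?_ ?_
        · simp [Prod.fst_add, Prod.smul_fst, hms2]
        · simp only [Prod.fst_add, Prod.snd_add, Prod.smul_fst, Prod.smul_snd, hms2,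
            halDM, harD, hψsesq2, hDMadd, smul_add]
          all_goals module
      · intro l m α β γ u v w
        refine Prod.ext ?_ ?_
        · simp [hAassoc]
        · simp only [hal2a, harUa, hass1, hass2, hass3]
          linear_combination (norm := module) -(hδ' l m α β γ u.1 v.1 w.1)
    · refine ⟨?_, ?_, ?_, ?_⟩
      · intro ω u v
        refine Prod.ext ?_ ?_
        · simp [Prod.fst_add, hPadd]
        · simp only [Prod.fst_add, Prod.snd_add, hPadd, hPMa, hχadd]
          all_goals module
      · intro ω c u
        refine Prod.ext ?_ ?_
        · simp [Prod.smul_fst, hPsmul]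
        · simp only [Prod.smul_fst, Prod.smul_snd, hPsmul, hPMs, hχsmul, smul_add]
          all_goals module
      · intro ω u
        refine Prod.ext ?_ ?_
        · simp [hPD]
        · simp [hPMD, hχD, hDMadd]
      · intro l α β u v
        refine Prod.ext ?_ ?_
        · simp only [Prod.fst_add, Prod.snd_add, Prod.smul_fst, Prod.smul_snd]
          exact hPrb l α β u.1 v.1
        · simp only [Prod.fst_add, Prod.snd_add, Prod.smul_fst, Prod.smul_snd,
            hal2a, hal2s, harUa, harUs, hPMa, hPMs, smul_add]
          have h1 := hRBal l α β u.1 v.2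
          have h2 := hRBar l α β u.2 v.1
          have h3 := hc' l α β u.1 v.1
          simp only [hPMa, hPMs] at h1 h2 h3
          linear_combination (norm := module) h1 + h2 + h3
end
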